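/- arXiv:2401.16198 — 3 statements merged into one kernel-verified Lean document; each statement's English description precedes it below -/
import Mathlib

section
/- Let π = ((α^1, τ^1, a^1), …, (α^K, τ^K, a^K)) be a valid p-scaled dynamic contract whose actions are consecutively decreasing, i.e., a^{k+1} = a^k − 1 for every 1 ≤ k ≤ K−1. Then there exists a valid free-fall p-scaled dynamic contract π′ with Util(π′) ≥ Util(π). -/
open Finset

/-- Expected reward `R_i = Σ_j F_{ij} r_j` of action `i`. -/
noncomputable def expRew (m : ℕ) (F : ℕ → ℕ → ℝ) (r : ℕ → ℝ) (i : ℕ) : ℝ :=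
  ∑ j ∈ Finset.Icc 1 m, F i j * r j

/-- Expected payment `P_i = Σ_j F_{ij} p_j` of action `i` under base contract `p`. -/
noncomputable def expPay (m : ℕ) (F : ℕ → ℕ → ℝ) (p : ℕ → ℝ) (i : ℕ) : ℝ :=
  ∑ j ∈ Finset.Icc 1 m, F i j * p j

/-- Basic assumptions of a principal-agent instance with base contract `p`. -/
def PInstance (n m : ℕ) (c : ℕ → ℝ) (F : ℕ → ℕ → ℝ) (r : ℕ → ℝ) (p : ℕ → ℝ) : Prop :=
  2 ≤ n ∧ (∀ i ∈ Finset.Icc 1 n, 0 ≤ c i) ∧ (∀ j ∈ Finset.Icc 1 m, 0 ≤ r j) ∧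
    (∀ i ∈ Finset.Icc 1 n,
      (∀ j ∈ Finset.Icc 1 m, 0 ≤ F i j) ∧ ∑ j ∈ Finset.Icc 1 m, F i j = 1) ∧
    (∀ j ∈ Finset.Icc 1 m, 0 ≤ p j)

/-- Best-response set `BR_p(x)` of the agent to the scaled contract `x·p`. -/
def BRp (n m : ℕ) (c : ℕ → ℝ) (F : ℕ → ℕ → ℝ) (p : ℕ → ℝ) (x : ℝ) : Set ℕ :=
  {i | i ∈ Finset.Icc 1 n ∧ ∀ j ∈ Finset.Icc 1 n,
    x * expPay m F p j - c j ≤ x * expPay m F p i - c i}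

/-- `β` records the breakpoints of `p`-scaled contracts: `β 0 = α_{0,1} = 0`,
`β i = α_{i,i+1}` (for `1 ≤ i ≤ n-1`), they are strictly increasing, and for
`α ≥ 0` action `i` is a best response iff `α_{i-1,i} ≤ α ≤ α_{i,i+1}`
(with `α_{n,n+1} = +∞`). -/
def Breakpoints (n m : ℕ) (c : ℕ → ℝ) (F : ℕ → ℕ → ℝ) (p : ℕ → ℝ) (β : ℕ → ℝ) : Prop :=
  β 0 = 0 ∧ (∀ i, i + 1 ≤ n - 1 → β i < β (i + 1)) ∧ (0 < β 1) ∧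
    (∀ x : ℝ, 0 ≤ x → ∀ i, 1 ≤ i → i ≤ n →
      (i ∈ BRp n m c F p x ↔ (β (i - 1) ≤ x ∧ (i < n → x ≤ β i))))

/-- A `p`-scaled dynamic contract with `K` segments (indexed `1,…,K`):
scalars `α`, durations `τ`, and actions `a`. -/
structure DSC where
  K : ℕ
  α : ℕ → ℝ
  τ : ℕ → ℝ
  a : ℕ → ℕ

namespace DSC

/-- Total duration of the first `k` segments. -/
noncomputable def Tsum (π : DSC) (k : ℕ) : ℝ := ∑ j ∈ Finset.Icc 1 k, π.τ j

/-- Time-averaged scalar `ᾱ^k` after the first `k` segments. -/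
noncomputable def avg (π : DSC) (k : ℕ) : ℝ :=
  (∑ j ∈ Finset.Icc 1 k, π.α j * π.τ j) / π.Tsum k

/-- Validity of a `p`-scaled dynamic contract. -/
def Valid (n m : ℕ) (c : ℕ → ℝ) (F : ℕ → ℕ → ℝ) (p : ℕ → ℝ) (π : DSC) : Prop :=
  1 ≤ π.K ∧
    (∀ k ∈ Finset.Icc 1 π.K, 0 ≤ π.α k ∧ 0 < π.τ k ∧ π.a k ∈ Finset.Icc 1 n) ∧
    (∀ k ∈ Finset.Icc 1 π.K, π.a k ∈ BRp n m c F p (π.avg k)) ∧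
    (∀ k, 2 ≤ k → k ≤ π.K → π.a k ∈ BRp n m c F p (π.avg (k - 1)))

/-- Time-averaged principal utility. -/
noncomputable def Util (m : ℕ) (F : ℕ → ℕ → ℝ) (r : ℕ → ℝ) (p : ℕ → ℝ) (π : DSC) : ℝ :=
  (∑ k ∈ Finset.Icc 1 π.K,
    π.τ k * (expRew m F r (π.a k) - π.α k * expPay m F p (π.a k))) / π.Tsum π.K

/-- Free-fall: the zero contract is offered on every segment after the first. -/
def FreeFall (π : DSC) : Prop := ∀ k, 2 ≤ k → k ≤ π.K → π.α k = 0

end DSC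

/-!
Write `A_k` and `T_k` for the payment and the time accumulated over the first `k` segments, so
that `ᾱ^k = A_k / T_k`, and `W_i = R_i - c_i` for the welfare of action `i`. Since `a^k` and
`a^{k+1}` are both best responses at `ᾱ^k`, summation by parts gives
`Util(π) = R_{a^K} - ᾱ^K P_{a^K} + (1 / T_K) Σ_{k<K} T_k (W_{a^k} - W_{a^{k+1}})`.
When the actions decrease one step at a time, `ᾱ^k = α_{a^{k+1}, a^k}` is positive and strictly
decreasing for `k < K`, so `T_k = A_k / ᾱ^k`, and a second summation by parts (with `A_k`
nondecreasing) bounds the sum by `A_K` times the largest tail sum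
`Σ_{k₀ ≤ j < K} (W_{a^j} - W_{a^{j+1}}) / ᾱ^j`. A free-fall contract that pays once at level
`ᾱ^{k₀}` and then lets the running average drift through `ᾱ^{k₀}, …, ᾱ^K` induces the same
actions and attains exactly this bound.
-/

theorem Finset.sum_range_mul_le_mul_of_sum_Ico_le {A g : ℕ → ℝ} {K : ℕ} {S : ℝ}
    (hA0 : A 0 = 0) (hA : ∀ k < K, A k ≤ A (k + 1))
    (hS : ∀ k ∈ Icc 1 K, ∑ j ∈ Ico k K, g j ≤ S) :
    ∑ k ∈ range K, A k * g k ≤ A K * S := by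
  rcases K with _ | N
  · simp [hA0]
  have hS0 : 0 ≤ S := by simpa using hS (N + 1) (by simp)
  have hprefix : ∀ i ∈ range N, ∑ j ∈ range (N + 1), g j - S ≤ ∑ j ∈ range (i + 1), g j := by
    intro i hi
    have := hS (i + 1) (by simp at hi ⊢; omega)
    rw [sum_Ico_eq_sub _ (by simp at hi; omega)] at this
    linarith
  have hparts := sum_range_by_parts A g (N + 1)
  simp only [smul_eq_mul, Nat.add_sub_cancel] at hparts
  have hlow : A N * (∑ j ∈ range (N + 1), g j - S) ≤
      ∑ i ∈ range N, (A (i + 1) - A i) * ∑ j ∈ range (i + 1), g j := by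
    rw [← sub_zero (A N), ← hA0, ← sum_range_sub A N, sum_mul]
    exact sum_le_sum fun i hi =>
      mul_le_mul_of_nonneg_left (hprefix i hi) (sub_nonneg.2 (hA i (by simp at hi; omega)))
  calc ∑ k ∈ range (N + 1), A k * g k ≤ A N * S := by linear_combination hparts + hlow
    _ ≤ A (N + 1) * S := mul_le_mul_of_nonneg_right (hA N (by omega)) hS0

noncomputable def welfare (m : ℕ) (F : ℕ → ℕ → ℝ) (r c : ℕ → ℝ) (i : ℕ) : ℝ :=
  expRew m F r i - c i

theorem Breakpoints.pos {n m : ℕ} {c : ℕ → ℝ} {F : ℕ → ℕ → ℝ} {p β : ℕ → ℝ}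
    (hβ : Breakpoints n m c F p β) {i : ℕ} (hi : 1 ≤ i) (hin : i ≤ n - 1) : 0 < β i := by
  induction i, hi using Nat.le_induction with
  | base => exact hβ.2.2.1
  | succ i hi ih => exact (ih (by omega)).trans (hβ.2.1 i hin)

theorem Breakpoints.le_of_mem_BRp {n m : ℕ} {c : ℕ → ℝ} {F : ℕ → ℕ → ℝ} {p β : ℕ → ℝ}
    (hβ : Breakpoints n m c F p β) {x : ℝ} (hx : 0 ≤ x) {i : ℕ} (hi : i ∈ BRp n m c F p x)
    (hin : i < n) : x ≤ β i := by
  have hi' := mem_Icc.1 hi.1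
  exact ((hβ.2.2.2 x hx i hi'.1 hi'.2).1 hi).2 hin

theorem Breakpoints.ge_of_mem_BRp {n m : ℕ} {c : ℕ → ℝ} {F : ℕ → ℕ → ℝ} {p β : ℕ → ℝ}
    (hβ : Breakpoints n m c F p β) {x : ℝ} (hx : 0 ≤ x) {i : ℕ} (hi : i ∈ BRp n m c F p x) :
    β (i - 1) ≤ x := by
  have hi' := mem_Icc.1 hi.1
  exact ((hβ.2.2.2 x hx i hi'.1 hi'.2).1 hi).1

namespace DSC

def paid (π : DSC) (k : ℕ) : ℝ := ∑ j ∈ Icc 1 k, π.α j * π.τ j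

noncomputable def welfareDrop (π : DSC) (m : ℕ) (F : ℕ → ℕ → ℝ) (r c : ℕ → ℝ) (k : ℕ) : ℝ :=
  welfare m F r c (π.a k) - welfare m F r c (π.a (k + 1))

noncomputable def freeFallValue (π : DSC) (m : ℕ) (F : ℕ → ℕ → ℝ) (r c p : ℕ → ℝ)
    (k L : ℕ) : ℝ :=
  expRew m F r (π.a L) - π.avg L * expPay m F p (π.a L) +
    π.avg L * ∑ j ∈ Ico k L, π.welfareDrop m F r c j / π.avg j

variable (π : DSC)

theorem avg_eq_paid_div (k : ℕ) : π.avg k = π.paid k / π.Tsum k := rfl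

@[simp] theorem Tsum_zero : π.Tsum 0 = 0 := by simp [Tsum]

@[simp] theorem paid_zero : π.paid 0 = 0 := by simp [paid]

theorem Tsum_succ (k : ℕ) : π.Tsum (k + 1) = π.Tsum k + π.τ (k + 1) :=
  sum_Icc_succ_top (by omega) _

theorem paid_succ (k : ℕ) : π.paid (k + 1) = π.paid k + π.α (k + 1) * π.τ (k + 1) :=
  sum_Icc_succ_top (by omega) _

/-- The first segment pays the total amount `1` at level `ᾱ^{s+1}`; the durations make the
elapsed time after `j` segments equal to `1 / ᾱ^{s+j}`, so the running averages are those of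
segments `s + 1, …, L` of `π`. -/
noncomputable def freeFallReplay (π : DSC) (s L : ℕ) : DSC where
  K := L - s
  α j := if j = 1 then π.avg (s + 1) else 0
  τ j := if j = 1 then (π.avg (s + 1))⁻¹ else (π.avg (s + j))⁻¹ - (π.avg (s + j - 1))⁻¹
  a j := π.a (s + j)

theorem a_freeFallReplay (s L j : ℕ) : (π.freeFallReplay s L).a j = π.a (s + j) := rfl

theorem welfareDrop_freeFallReplay (m : ℕ) (F : ℕ → ℕ → ℝ) (r c : ℕ → ℝ) (s L j : ℕ) :
    (π.freeFallReplay s L).welfareDrop m F r c j = π.welfareDrop m F r c (s + j) := rfl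

theorem freeFall_freeFallReplay (s L : ℕ) : (π.freeFallReplay s L).FreeFall :=
  fun _ hj _ => if_neg (by omega)

theorem Tsum_freeFallReplay (s L : ℕ) {j : ℕ} (hj : 1 ≤ j) :
    (π.freeFallReplay s L).Tsum j = (π.avg (s + j))⁻¹ := by
  induction j, hj using Nat.le_induction with
  | base => simp [Tsum, freeFallReplay]
  | succ j hj ih =>
    rw [Tsum_succ, ih]
    simp only [freeFallReplay, if_neg (show j + 1 ≠ 1 by omega)]
    rw [show s + (j + 1) - 1 = s + j by omega]
    ring_nf

theorem paid_freeFallReplay (s L : ℕ) (h : π.avg (s + 1) ≠ 0) {j : ℕ} (hj : 1 ≤ j) :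
    (π.freeFallReplay s L).paid j = 1 := by
  induction j, hj using Nat.le_induction with
  | base => simp [paid, freeFallReplay, h]
  | succ j hj ih =>
    rw [paid_succ, ih]
    simp [freeFallReplay, show j ≠ 0 by omega]

theorem avg_freeFallReplay (s L : ℕ) (h : π.avg (s + 1) ≠ 0) {j : ℕ} (hj : 1 ≤ j) :
    (π.freeFallReplay s L).avg j = π.avg (s + j) := by
  rw [avg_eq_paid_div, paid_freeFallReplay π s L h hj, Tsum_freeFallReplay π s L hj, one_div,
    inv_inv]

variable {n m : ℕ} {c : ℕ → ℝ} {F : ℕ → ℕ → ℝ} {p : ℕ → ℝ} {π}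

section Valid

variable (hπ : π.Valid n m c F p)
include hπ

theorem Valid.α_nonneg {k : ℕ} (hk : k ∈ Icc 1 π.K) : 0 ≤ π.α k := (hπ.2.1 k hk).1

theorem Valid.τ_pos {k : ℕ} (hk : k ∈ Icc 1 π.K) : 0 < π.τ k := (hπ.2.1 k hk).2.1

theorem Valid.Tsum_nonneg {k : ℕ} (hk : k ≤ π.K) : 0 ≤ π.Tsum k :=
  sum_nonneg fun j hj => (hπ.τ_pos (by simp at hj ⊢; omega)).le

theorem Valid.Tsum_pos {k : ℕ} (hk : k ∈ Icc 1 π.K) : 0 < π.Tsum k :=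
  sum_pos (fun j hj => hπ.τ_pos (by simp at hj hk ⊢; omega)) (nonempty_Icc.2 (mem_Icc.1 hk).1)

theorem Valid.paid_le_succ {k : ℕ} (hk : k < π.K) : π.paid k ≤ π.paid (k + 1) := by
  have hk' : k + 1 ∈ Icc 1 π.K := by simp; omega
  rw [paid_succ]
  linarith [mul_nonneg (hπ.α_nonneg hk') (hπ.τ_pos hk').le]

theorem Valid.paid_nonneg {k : ℕ} (hk : k ≤ π.K) : 0 ≤ π.paid k :=
  sum_nonneg fun j hj => mul_nonneg (hπ.α_nonneg (by simp at hj ⊢; omega))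
    (hπ.τ_pos (by simp at hj ⊢; omega)).le

theorem Valid.avg_nonneg {k : ℕ} (hk : k ≤ π.K) : 0 ≤ π.avg k :=
  div_nonneg (hπ.paid_nonneg hk) (hπ.Tsum_nonneg hk)

theorem Valid.avg_succ_pos {k : ℕ} (hk : k < π.K) (hpos : 0 < π.avg k) :
    0 < π.avg (k + 1) := by
  have hpaid : 0 < π.paid k := by
    rw [avg_eq_paid_div] at hpos
    rcases div_pos_iff.1 hpos with h | h
    · exact h.1
    · linarith [hπ.paid_nonneg hk.le, h.1]
  rw [avg_eq_paid_div]
  exact div_pos (hpaid.trans_le (hπ.paid_le_succ hk)) (hπ.Tsum_pos (by simp; omega))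

theorem Valid.tie {k : ℕ} (hk : 1 ≤ k) (hkK : k < π.K) :
    π.avg k * expPay m F p (π.a k) - c (π.a k) =
      π.avg k * expPay m F p (π.a (k + 1)) - c (π.a (k + 1)) := by
  have hcur := hπ.2.2.1 k (by simp; omega)
  have hnext := hπ.2.2.2 (k + 1) (by omega) (by omega)
  rw [Nat.add_sub_cancel] at hnext
  exact le_antisymm (hnext.2 _ hcur.1) (hcur.2 _ hnext.1)

theorem Valid.paid_mul_sub_expPay {k : ℕ} (hk : k < π.K) :
    π.paid k * (expPay m F p (π.a k) - expPay m F p (π.a (k + 1))) =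
      π.Tsum k * (c (π.a k) - c (π.a (k + 1))) := by
  rcases Nat.eq_zero_or_pos k with rfl | hk1
  · simp
  have hT := (hπ.Tsum_pos (mem_Icc.2 ⟨hk1, hk.le⟩)).ne'
  have hpaid : π.paid k = π.avg k * π.Tsum k := by rw [avg_eq_paid_div, div_mul_cancel₀ _ hT]
  rw [hpaid]
  linear_combination π.Tsum k * hπ.tie hk1 hk

theorem Valid.sum_util_eq (r : ℕ → ℝ) {M : ℕ} (hM : M ≤ π.K) :
    ∑ k ∈ Icc 1 M, π.τ k * (expRew m F r (π.a k) - π.α k * expPay m F p (π.a k)) =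
      π.Tsum M * expRew m F r (π.a M) - π.paid M * expPay m F p (π.a M) +
        ∑ k ∈ range M, π.Tsum k * π.welfareDrop m F r c k := by
  induction M with
  | zero => simp
  | succ M ih =>
    rw [sum_Icc_succ_top (by omega), ih (by omega), sum_range_succ, Tsum_succ, paid_succ]
    simp only [welfareDrop, welfare]
    linear_combination -hπ.paid_mul_sub_expPay (k := M) (by omega)

theorem Valid.util_eq (r : ℕ → ℝ) :
    π.Util m F r p = expRew m F r (π.a π.K) - π.avg π.K * expPay m F p (π.a π.K) +
      (∑ k ∈ range π.K, π.Tsum k * π.welfareDrop m F r c k) / π.Tsum π.K := by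
  have hT := (hπ.Tsum_pos (mem_Icc.2 ⟨hπ.1, le_rfl⟩)).ne'
  rw [Util, hπ.sum_util_eq r le_rfl, avg_eq_paid_div]
  field_simp

theorem Valid.util_le_freeFallValue (r : ℕ → ℝ) (hpos : ∀ j ∈ Ico 1 π.K, 0 < π.avg j)
    {k : ℕ} (hk : ∀ j ∈ Icc 1 π.K, ∑ i ∈ Ico j π.K, π.welfareDrop m F r c i / π.avg i ≤
      ∑ i ∈ Ico k π.K, π.welfareDrop m F r c i / π.avg i) :
    π.Util m F r p ≤ π.freeFallValue m F r c p k π.K := by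
  have hT := hπ.Tsum_pos (mem_Icc.2 ⟨hπ.1, le_rfl⟩)
  have hsum : ∑ j ∈ range π.K, π.Tsum j * π.welfareDrop m F r c j =
      ∑ j ∈ range π.K, π.paid j * (π.welfareDrop m F r c j / π.avg j) := by
    refine sum_congr rfl fun j hj => ?_
    rcases Nat.eq_zero_or_pos j with rfl | hj1
    · simp
    have hj' : j ∈ Ico 1 π.K := by simp at hj ⊢; omega
    have hpaid := (hpos j hj').ne'
    rw [avg_eq_paid_div] at hpaid ⊢
    field_simp [(div_ne_zero_iff.1 hpaid).1]
  rw [hπ.util_eq r, freeFallValue, hsum]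
  apply add_le_add_right
  calc (∑ j ∈ range π.K, π.paid j * (π.welfareDrop m F r c j / π.avg j)) / π.Tsum π.K
      ≤ π.paid π.K * (∑ i ∈ Ico k π.K, π.welfareDrop m F r c i / π.avg i) / π.Tsum π.K := by
        refine div_le_div_of_nonneg_right ?_ hT.le
        exact sum_range_mul_le_mul_of_sum_Ico_le π.paid_zero (fun j hj => hπ.paid_le_succ hj) hk
    _ = _ := by rw [avg_eq_paid_div]; ring

theorem Valid.valid_freeFallReplay {s L : ℕ} (hsL : s < L) (hLK : L ≤ π.K)
    (hanti : ∀ j ∈ Ico (s + 1) L, π.avg (j + 1) < π.avg j)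
    (hpos : ∀ j ∈ Icc (s + 1) L, 0 < π.avg j) :
    (π.freeFallReplay s L).Valid n m c F p := by
  have h1 : π.avg (s + 1) ≠ 0 := (hpos _ (by simp; omega)).ne'
  refine ⟨show 1 ≤ L - s by omega, fun j hj => ?_, fun j hj => ?_, fun j hj2 hjK => ?_⟩
  · replace hj : 1 ≤ j ∧ j ≤ L - s := mem_Icc.1 hj
    refine ⟨?_, ?_, (hπ.2.1 (s + j) (by simp; omega)).2.2⟩ <;> simp only [DSC.freeFallReplay]
    · split_ifs
      exacts [(hpos _ (by simp; omega)).le, le_rfl]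
    · split_ifs with hj1
      · exact inv_pos.2 (hpos _ (by simp; omega))
      · have hlt := hanti (s + j - 1) (by simp; omega)
        rw [show s + j - 1 + 1 = s + j by omega] at hlt
        exact sub_pos.2
          ((inv_lt_inv₀ (hpos _ (by simp; omega)) (hpos _ (by simp; omega))).2 hlt)
  · replace hj : 1 ≤ j ∧ j ≤ L - s := mem_Icc.1 hj
    rw [avg_freeFallReplay π s L h1 hj.1]
    exact hπ.2.2.1 (s + j) (by simp; omega)
  · replace hjK : j ≤ L - s := hjK
    rw [avg_freeFallReplay π s L h1 (by omega), show s + (j - 1) = s + j - 1 by omega]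
    exact hπ.2.2.2 (s + j) (by omega) (by omega)

theorem Valid.util_freeFallReplay (r : ℕ → ℝ) {s L : ℕ} (hsL : s < L) (hLK : L ≤ π.K)
    (hanti : ∀ j ∈ Ico (s + 1) L, π.avg (j + 1) < π.avg j)
    (hpos : ∀ j ∈ Icc (s + 1) L, 0 < π.avg j) :
    (π.freeFallReplay s L).Util m F r p = π.freeFallValue m F r c p (s + 1) L := by
  obtain ⟨N, rfl⟩ : ∃ N, L = s + (N + 1) := ⟨L - s - 1, by omega⟩
  have h1 : π.avg (s + 1) ≠ 0 := (hpos _ (by simp)).ne'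
  have hsum : ∑ i ∈ range N, (π.freeFallReplay s (s + (N + 1))).Tsum (i + 1) *
        (π.freeFallReplay s (s + (N + 1))).welfareDrop m F r c (i + 1) =
      ∑ i ∈ range N, π.welfareDrop m F r c (s + 1 + i) / π.avg (s + 1 + i) :=
    sum_congr rfl fun i _ => by
      rw [Tsum_freeFallReplay π _ _ (by omega), welfareDrop_freeFallReplay,
        show s + (i + 1) = s + 1 + i by omega, inv_mul_eq_div]
  rw [(hπ.valid_freeFallReplay hsL hLK hanti hpos).util_eq r,
    show (π.freeFallReplay s (s + (N + 1))).K = N + 1 by simp [DSC.freeFallReplay],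
    avg_freeFallReplay π _ _ h1 (by omega),
    Tsum_freeFallReplay π _ _ (by omega), a_freeFallReplay, sum_range_succ', hsum, freeFallValue,
    sum_Ico_eq_sum_range, show s + (N + 1) - (s + 1) = N by omega]
  simp only [Tsum_zero, zero_mul, add_zero, div_inv_eq_mul]
  ring

theorem Valid.freeFallValue_succ (r : ℕ → ℝ) {k L : ℕ} (hk : k ≤ L) (hL : 1 ≤ L)
    (hLK : L < π.K) (heq : π.avg (L + 1) = π.avg L) (hne : π.avg L ≠ 0) :
    π.freeFallValue m F r c p k (L + 1) = π.freeFallValue m F r c p k L := by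
  rw [freeFallValue, freeFallValue, sum_Ico_succ_top hk, heq, mul_add, mul_div_cancel₀ _ hne]
  simp only [welfareDrop, welfare]
  linear_combination hπ.tie hL hLK

end Valid

section Decreasing

variable {β : ℕ → ℝ} (hπ : π.Valid n m c F p) (hβ : Breakpoints n m c F p β)
  (hstep : ∀ k, 1 ≤ k → k < π.K → π.a (k + 1) + 1 = π.a k)
include hπ hβ hstep

theorem Valid.avg_eq_breakpoint_of_decreasing {k : ℕ} (hk : 1 ≤ k) (hkK : k < π.K) :
    π.avg k = β (π.a (k + 1)) := by
  have hx := hπ.avg_nonneg hkK.le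
  have hcur := hπ.2.2.1 k (by simp; omega)
  have hnext := hπ.2.2.2 (k + 1) (by omega) (by omega)
  rw [Nat.add_sub_cancel] at hnext
  have hn := (mem_Icc.1 hcur.1).2
  have hk' := hstep k hk hkK
  refine le_antisymm (hβ.le_of_mem_BRp hx hnext (by omega)) ?_
  have hlow := hβ.ge_of_mem_BRp hx hcur
  rwa [show π.a k - 1 = π.a (k + 1) by omega] at hlow

theorem Valid.avg_pos_of_decreasing {k : ℕ} (hk : 1 ≤ k) (hkK : k < π.K) : 0 < π.avg k := by
  rw [hπ.avg_eq_breakpoint_of_decreasing hβ hstep hk hkK]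
  have h1 := (mem_Icc.1 (hπ.2.1 (k + 1) (by simp; omega)).2.2).1
  have hn := (mem_Icc.1 (hπ.2.1 k (by simp; omega)).2.2).2
  have hk' := hstep k hk hkK
  exact hβ.pos h1 (by omega)

theorem Valid.avg_succ_lt_of_decreasing {k : ℕ} (hk : 1 ≤ k) (hkK : k + 1 < π.K) :
    π.avg (k + 1) < π.avg k := by
  rw [hπ.avg_eq_breakpoint_of_decreasing hβ hstep hk (by omega),
    hπ.avg_eq_breakpoint_of_decreasing hβ hstep (by omega) hkK, ← hstep (k + 1) (by omega) hkK]
  have hn := (mem_Icc.1 (hπ.2.1 k (by simp; omega)).2.2).2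
  have hk' := hstep k hk (by omega)
  have hk'' := hstep (k + 1) (by omega) hkK
  exact hβ.2.1 _ (by omega)

theorem Valid.avg_last_le_of_decreasing (hK : 2 ≤ π.K) : π.avg π.K ≤ π.avg (π.K - 1) := by
  have hK' : π.K - 1 + 1 = π.K := by omega
  have hlast := hπ.2.2.1 π.K (by simp; omega)
  have hn := (mem_Icc.1 (hπ.2.1 (π.K - 1) (by simp; omega)).2.2).2
  have hprev := hstep (π.K - 1) (by omega) (by omega)
  rw [hK'] at hprev
  rw [hπ.avg_eq_breakpoint_of_decreasing hβ hstep (k := π.K - 1) (by omega) (by omega), hK']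
  exact hβ.le_of_mem_BRp (hπ.avg_nonneg le_rfl) hlast (by omega)

theorem Valid.exists_freeFall_util_eq_freeFallValue_of_decreasing (r : ℕ → ℝ)
    (hK : 2 ≤ π.K) {k : ℕ} (hk : k ∈ Icc 1 π.K) :
    ∃ π' : DSC, π'.Valid n m c F p ∧ π'.FreeFall ∧
      π'.Util m F r p = π.freeFallValue m F r c p k π.K := by
  obtain ⟨s, rfl⟩ : ∃ s, k = s + 1 := ⟨k - 1, by simp at hk; omega⟩
  have hk' := mem_Icc.1 hk
  have hK' : π.K - 1 + 1 = π.K := by omega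
  have hpos : ∀ j ∈ Icc (s + 1) π.K, 0 < π.avg j := by
    intro j hj
    rcases lt_or_eq_of_le (mem_Icc.1 hj).2 with hjK | rfl
    · exact hπ.avg_pos_of_decreasing hβ hstep (by simp at hj; omega) hjK
    · simpa [hK'] using hπ.avg_succ_pos (k := π.K - 1) (by omega)
        (hπ.avg_pos_of_decreasing hβ hstep (by omega) (by omega))
  have hanti : ∀ j ∈ Ico (s + 1) (π.K - 1), π.avg (j + 1) < π.avg j := fun j hj =>
    hπ.avg_succ_lt_of_decreasing hβ hstep (by simp at hj; omega) (by simp at hj; omega)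
  by_cases hlast : s + 1 = π.K ∨ π.avg π.K < π.avg (π.K - 1)
  · have hanti' : ∀ j ∈ Ico (s + 1) π.K, π.avg (j + 1) < π.avg j := by
      intro j hj
      rcases lt_or_eq_of_le (Nat.le_sub_one_of_lt (mem_Ico.1 hj).2) with hj' | rfl
      · exact hanti j (by simp at hj ⊢; omega)
      · rw [hK']
        exact hlast.resolve_left (by simp at hj; omega)
    exact ⟨_, hπ.valid_freeFallReplay (by omega) le_rfl hanti' hpos,
      π.freeFall_freeFallReplay _ _,
      hπ.util_freeFallReplay r (by omega) le_rfl hanti' hpos⟩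
  · rw [not_or, not_lt] at hlast
    -- the last segment does not move the average, so it can be dropped from the replay
    have heq : π.avg (π.K - 1 + 1) = π.avg (π.K - 1) := by
      rw [hK']
      exact le_antisymm (hπ.avg_last_le_of_decreasing hβ hstep hK) hlast.2
    have hpos' : ∀ j ∈ Icc (s + 1) (π.K - 1), 0 < π.avg j := fun j hj =>
      hpos j (by simp at hj ⊢; omega)
    refine ⟨_, hπ.valid_freeFallReplay (by omega) (by omega) hanti hpos',
      π.freeFall_freeFallReplay _ _, ?_⟩
    rw [hπ.util_freeFallReplay r (by omega) (by omega) hanti hpos',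
      ← hπ.freeFallValue_succ r (by omega) (by omega) (by omega) heq
        (hpos' _ (by simp; omega)).ne', hK']

end Decreasing

end DSC

theorem decreasing_dominated_by_free_fall_general (n m : ℕ) (c : ℕ → ℝ) (F : ℕ → ℕ → ℝ)
    (r : ℕ → ℝ) (p : ℕ → ℝ) (β : ℕ → ℝ)
    (hβ : Breakpoints n m c F p β)
    (π : DSC) (hπ : π.Valid n m c F p)
    (hdec : ∀ k, 1 ≤ k → k < π.K → (π.a (k + 1) : ℤ) = (π.a k : ℤ) - 1) :
    ∃ π' : DSC, π'.Valid n m c F p ∧ π'.FreeFall ∧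
      π'.Util m F r p ≥ π.Util m F r p := by
  rcases Nat.lt_or_ge π.K 2 with hK | hK
  · exact ⟨π, hπ, fun k hk hkK => by omega, le_rfl⟩
  have hstep : ∀ k, 1 ≤ k → k < π.K → π.a (k + 1) + 1 = π.a k := fun k hk hkK => by
    have := hdec k hk hkK
    omega
  obtain ⟨k, hk, hmax⟩ := exists_max_image (Icc 1 π.K)
    (fun j => ∑ i ∈ Ico j π.K, π.welfareDrop m F r c i / π.avg i) ⟨π.K, by simp; omega⟩
  obtain ⟨π', hvalid, hfree, hutil⟩ :=
    hπ.exists_freeFall_util_eq_freeFallValue_of_decreasing hβ hstep r hK hk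
  refine ⟨π', hvalid, hfree, hutil ▸ hπ.util_le_freeFallValue r (fun j hj => ?_) hmax⟩
  exact hπ.avg_pos_of_decreasing hβ hstep (mem_Ico.1 hj).1 (mem_Ico.1 hj).2

/-- A valid `p`-scaled dynamic contract with consecutively
decreasing actions is dominated by a valid free-fall `p`-scaled contract. -/
theorem decreasing_dominated_by_free_fall (n m : ℕ) (c : ℕ → ℝ) (F : ℕ → ℕ → ℝ)
    (r : ℕ → ℝ) (p : ℕ → ℝ) (β : ℕ → ℝ)
    (hInst : PInstance n m c F r p) (hβ : Breakpoints n m c F p β)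
    (π : DSC) (hπ : π.Valid n m c F p)
    (hdec : ∀ k, 1 ≤ k → k < π.K → (π.a (k + 1) : ℤ) = (π.a k : ℤ) - 1) :
    ∃ π' : DSC, π'.Valid n m c F p ∧ π'.FreeFall ∧
      π'.Util m F r p ≥ π.Util m F r p :=
  decreasing_dominated_by_free_fall_general n m c F r p β hβ π hπ hdec
end

section
/- There exist universal constants c₁, c₂ > 0 and N₀ such that for every n ≥ N₀ there is a linear contract instance with n actions with the following properties: (i) the optimal static principal utility R_⋆ := max_{1≤i≤n} (1 − α_{i−1,i})·R_i (with α_{0,1} := 0) satisfies 1 ≤ R_⋆ ≤ 2, and under an optimal static contract the agent's best-response utility max_i (α·R_i − c_i) equals 0; (ii) there exists a valid free-fall dynamic linear contract π with principal utility Util(π) ≥ c₁·n and agent time-averaged utility UtilA(π) ≥ c₂·log₂ n. In particular, the optimal dynamic contract improves expected welfare over the best static contract by a multiplicative factor Ω(n), while improving the agent's utility by an additive Ω(log n). -/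
open Finset

/-- Indifference point `α_{i,i+1}` between actions `i` and `i+1`. -/
noncomputable def indiff (c R : ℕ → ℝ) (i : ℕ) : ℝ :=
  (c (i + 1) - c i) / (R (i + 1) - R i)

/-- Breakpoint `α_{i,i+1}` with the convention `α_{0,1} := 0`. -/
noncomputable def bp (c R : ℕ → ℝ) (i : ℕ) : ℝ :=
  if i = 0 then 0 else indiff c R i

/-- A linear contract instance with `n ≥ 2` actions indexed `1,…,n`:
costs `0 = c_1 < … < c_n`, rewards `0 ≤ R_1 < … < R_n`, and indifference
points satisfying `0 < α_{1,2} < … < α_{n-1,n} ≤ 1`. -/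
def LinInstance (n : ℕ) (c R : ℕ → ℝ) : Prop :=
  2 ≤ n ∧ c 1 = 0 ∧ 0 ≤ R 1 ∧
    (∀ i, 1 ≤ i → i < n → c i < c (i + 1)) ∧
    (∀ i, 1 ≤ i → i < n → R i < R (i + 1)) ∧
    0 < indiff c R 1 ∧
    (∀ i, 1 ≤ i → i + 1 ≤ n - 1 → indiff c R i < indiff c R (i + 1)) ∧
    indiff c R (n - 1) ≤ 1

/-- Best-response set of the agent to the linear contract with scalar `x`. -/
def BR (n : ℕ) (c R : ℕ → ℝ) (x : ℝ) : Set ℕ :=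
  {i | i ∈ Finset.Icc 1 n ∧ ∀ j ∈ Finset.Icc 1 n, x * R j - c j ≤ x * R i - c i}

/-- A dynamic linear contract with `K` segments (indexed `1,…,K`):
scalars `α`, durations `τ`, and actions `a`. -/
structure DLC where
  K : ℕ
  α : ℕ → ℝ
  τ : ℕ → ℝ
  a : ℕ → ℕ

namespace DLC

/-- Total duration of the first `k` segments. -/
noncomputable def Tsum (π : DLC) (k : ℕ) : ℝ := ∑ j ∈ Finset.Icc 1 k, π.τ j

/-- Cumulative scalar contract of the first `k` segments. -/
noncomputable def Asum (π : DLC) (k : ℕ) : ℝ := ∑ j ∈ Finset.Icc 1 k, π.α j * π.τ j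

/-- Time-averaged contract `ᾱ^k` after the first `k` segments. -/
noncomputable def avg (π : DLC) (k : ℕ) : ℝ := π.Asum k / π.Tsum k

/-- Validity: positive durations, nonnegative scalars, actions in `{1,…,n}`,
and each action is a best response to the historical average contract at the
end of its segment, and (for `k ≥ 2`) also at its beginning. -/
def Valid (n : ℕ) (c R : ℕ → ℝ) (π : DLC) : Prop :=
  1 ≤ π.K ∧
    (∀ k ∈ Finset.Icc 1 π.K, 0 ≤ π.α k ∧ 0 < π.τ k ∧ π.a k ∈ Finset.Icc 1 n) ∧
    (∀ k ∈ Finset.Icc 1 π.K, π.a k ∈ BR n c R (π.avg k)) ∧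
    (∀ k, 2 ≤ k → k ≤ π.K → π.a k ∈ BR n c R (π.avg (k - 1)))

/-- Time-averaged principal utility. -/
noncomputable def Util (R : ℕ → ℝ) (π : DLC) : ℝ :=
  (∑ k ∈ Finset.Icc 1 π.K, π.τ k * (1 - π.α k) * R (π.a k)) / π.Tsum π.K

/-- Time-averaged agent utility. -/
noncomputable def UtilA (c R : ℕ → ℝ) (π : DLC) : ℝ :=
  (∑ k ∈ Finset.Icc 1 π.K, π.τ k * (π.α k * R (π.a k) - c (π.a k))) / π.Tsum π.K

/-- Free-fall: the zero contract is offered on every segment after the first. -/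
def FreeFall (π : DLC) : Prop := ∀ k, 2 ≤ k → k ≤ π.K → π.α k = 0

/-- Cumulative principal utility `u_P^{(t)}(π)` up to time `t`. -/
noncomputable def cumUtil (R : ℕ → ℝ) (π : DLC) (t : ℝ) : ℝ :=
  ∑ k ∈ Finset.Icc 1 π.K,
    (min t (π.Tsum k) - min t (π.Tsum (k - 1))) * (1 - π.α k) * R (π.a k)

/-- Cumulative scalar contract `A^{(t)}` up to time `t`. -/
noncomputable def cumA (π : DLC) (t : ℝ) : ℝ :=
  ∑ k ∈ Finset.Icc 1 π.K, (min t (π.Tsum k) - min t (π.Tsum (k - 1))) * π.α k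

end DLC

/-!
Take rewards `R_i = 2^(i-1)` and costs for which `α_{i,i+1} = 1 - 2^(-i)`. Every action then gives
the principal the same static utility `(1 - α_{i-1,i}) R_i = 1`, attained already at `α = 0`, where
the agent earns nothing. Dynamically, the principal offers `α_{n-1,n}` for one unit of time and then
pays nothing: the average contract decays through the breakpoints and the agent walks down from
action `n` to action `n/2 + 1`, spending time about `2^(-i)` on action `i`. Each of these `n/2`
phases earns the principal at least `1/4`, the whole run lasts at most two units of time, and the
agent ends with the utility `(n/2)/2` of its last action at the last average contract.
-/

lemma utility_succ_sub_utility {c R : ℕ → ℝ} {l : ℕ} (hR : R l < R (l + 1)) (x : ℝ) :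
    (x * R (l + 1) - c (l + 1)) - (x * R l - c l) = (R (l + 1) - R l) * (x - indiff c R l) := by
  rw [indiff]
  field_simp [(sub_pos.2 hR).ne']
  ring

lemma mem_BR_of_indiff {n i : ℕ} {c R : ℕ → ℝ} {x : ℝ}
    (hR : ∀ l, 1 ≤ l → l < n → R l < R (l + 1)) (hi : i ∈ Icc 1 n)
    (hbelow : ∀ l, 1 ≤ l → l < i → indiff c R l ≤ x)
    (habove : ∀ l, i ≤ l → l < n → x ≤ indiff c R l) : i ∈ BR n c R x := by
  obtain ⟨hi1, hin⟩ := mem_Icc.1 hi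
  set u : ℕ → ℝ := fun j => x * R j - c j
  have hstep (l : ℕ) (hl : 1 ≤ l) (hln : l < n) :
      u (l + 1) - u l = (R (l + 1) - R l) * (x - indiff c R l) :=
    utility_succ_sub_utility (hR l hl hln) x
  have hup : MonotoneOn u (Set.Icc 1 i) := by
    refine monotoneOn_of_le_add_one Set.ordConnected_Icc fun l _ hl _ => ?_
    have := hstep l hl.1 (by grind)
    have := hR l hl.1 (by grind)
    nlinarith [hbelow l hl.1 (by grind)]
  have hdown : AntitoneOn u (Set.Icc i n) := by
    refine antitoneOn_of_add_one_le Set.ordConnected_Icc fun l _ hl _ => ?_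
    have := hstep l (by grind) (by grind)
    have := hR l (by grind) (by grind)
    nlinarith [habove l hl.1 (by grind)]
  refine ⟨hi, fun j hj => ?_⟩
  obtain ⟨hj1, hjn⟩ := mem_Icc.1 hj
  rcases le_total j i with hji | hij
  · exact hup ⟨hj1, hji⟩ ⟨hi1, le_rfl⟩ hji
  · exact hdown ⟨le_rfl, hin⟩ ⟨hij, hjn⟩ hij

lemma utility_eq_of_mem_BR {n i j : ℕ} {c R : ℕ → ℝ} {x : ℝ}
    (hi : i ∈ BR n c R x) (hj : j ∈ BR n c R x) : x * R i - c i = x * R j - c j :=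
  le_antisymm (hj.2 i hi.1) (hi.2 j hj.1)

namespace DLC

variable {n : ℕ} {c R : ℕ → ℝ} {π : DLC}

lemma Tsum_succ (π : DLC) (k : ℕ) : π.Tsum (k + 1) = π.Tsum k + π.τ (k + 1) :=
  sum_Icc_succ_top (by omega) _

lemma Asum_succ (π : DLC) (k : ℕ) : π.Asum (k + 1) = π.Asum k + π.α (k + 1) * π.τ (k + 1) :=
  sum_Icc_succ_top (by omega) _

lemma FreeFall.Asum_eq (h : π.FreeFall) {k : ℕ} (hk : 1 ≤ k) (hkK : k ≤ π.K) :
    π.Asum k = π.α 1 * π.τ 1 := by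
  induction k, hk using Nat.le_induction with
  | base => simp [Asum]
  | succ k hk ih => rw [Asum_succ, ih (by omega), h (k + 1) (by omega) hkK, zero_mul, add_zero]

lemma Valid.Tsum_pos (h : π.Valid n c R) {k : ℕ} (hk : 1 ≤ k) (hkK : k ≤ π.K) :
    0 < π.Tsum k :=
  sum_pos (fun j hj => (h.2.1 j (mem_Icc.2 ⟨(mem_Icc.1 hj).1, (mem_Icc.1 hj).2.trans hkK⟩)).2.1)
    (nonempty_Icc.2 hk)

/-- Switching between two actions at an instant where both are best responses to the average
contract costs the agent nothing, so its cumulative utility is that of playing the current action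
against the cumulative contract. -/
lemma Valid.sum_utilA_eq (h : π.Valid n c R) {k : ℕ} (hk : 1 ≤ k) (hkK : k ≤ π.K) :
    ∑ j ∈ Icc 1 k, π.τ j * (π.α j * R (π.a j) - c (π.a j)) =
      π.Asum k * R (π.a k) - π.Tsum k * c (π.a k) := by
  induction k, hk using Nat.le_induction with
  | base => simp only [Asum, Tsum, Icc_self, sum_singleton]; ring
  | succ k hk ih =>
    have hT := h.Tsum_pos hk (by omega)
    have hswitch := utility_eq_of_mem_BR (h.2.2.1 k (mem_Icc.2 ⟨hk, by omega⟩))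
      (h.2.2.2 (k + 1) (by omega) hkK)
    rw [avg] at hswitch
    field_simp at hswitch
    rw [sum_Icc_succ_top (by omega), ih (by omega), Asum_succ, Tsum_succ]
    linear_combination hswitch

lemma Valid.utilA_eq (h : π.Valid n c R) :
    π.UtilA c R = π.avg π.K * R (π.a π.K) - c (π.a π.K) := by
  have hT := h.Tsum_pos h.1 le_rfl
  rw [UtilA, h.sum_utilA_eq h.1 le_rfl, avg]
  field_simp

lemma le_util_of_forall_le {b T : ℝ} (hb : 0 ≤ b) (hT : 0 < π.Tsum π.K) (hTle : π.Tsum π.K ≤ T)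
    (hpay : ∀ k ∈ Icc 1 π.K, b ≤ π.τ k * (1 - π.α k) * R (π.a k)) :
    π.K * b / T ≤ π.Util R := by
  have hsum : π.K * b ≤ ∑ k ∈ Icc 1 π.K, π.τ k * (1 - π.α k) * R (π.a k) := by
    simpa using card_nsmul_le_sum _ _ _ hpay
  exact (div_le_div_of_nonneg_right hsum (hT.trans_le hTle).le).trans
    (div_le_div_of_nonneg_left ((mul_nonneg (Nat.cast_nonneg _) hb).trans hsum) hT hTle)

end DLC

namespace Doubling

noncomputable def breakpoint (j : ℕ) : ℝ := 1 - (1 / 2) ^ j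

noncomputable def reward (i : ℕ) : ℝ := 2 ^ (i - 1)

noncomputable def cost (i : ℕ) : ℝ := 2 ^ (i - 1) - 1 - ((i : ℝ) - 1) / 2

lemma breakpoint_zero : breakpoint 0 = 0 := by simp [breakpoint]

lemma breakpoint_strictMono : StrictMono breakpoint := fun _ _ h =>
  sub_lt_sub_left (pow_right_strictAnti₀ (by norm_num) (by norm_num) h) 1

lemma breakpoint_le_one (j : ℕ) : breakpoint j ≤ 1 := by
  have : (0 : ℝ) ≤ (1 / 2) ^ j := by positivity
  rw [breakpoint]; linarith

lemma half_le_breakpoint {j : ℕ} (hj : 1 ≤ j) : 1 / 2 ≤ breakpoint j := by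
  calc 1 / 2 = breakpoint 1 := by norm_num [breakpoint]
    _ ≤ breakpoint j := breakpoint_strictMono.monotone hj

lemma breakpoint_pos {j : ℕ} (hj : 1 ≤ j) : 0 < breakpoint j :=
  lt_of_lt_of_le (by norm_num) (half_le_breakpoint hj)

lemma one_sub_breakpoint_mul (j : ℕ) : (1 - breakpoint j) * 2 ^ j = 1 := by
  rw [breakpoint, sub_sub_cancel, ← mul_pow]; norm_num

lemma breakpoint_succ_sub (j : ℕ) : breakpoint (j + 1) - breakpoint j = (1 / 2) ^ (j + 1) := by
  rw [breakpoint, breakpoint, pow_succ]; ring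

lemma reward_pos (i : ℕ) : 0 < reward i := by rw [reward]; positivity

lemma reward_succ_sub {i : ℕ} (hi : 1 ≤ i) : reward (i + 1) - reward i = 2 ^ (i - 1) := by
  obtain ⟨j, rfl⟩ := Nat.exists_eq_add_of_le' hi
  simp only [reward, Nat.add_sub_cancel, pow_succ]; ring

lemma reward_lt_succ {i : ℕ} (hi : 1 ≤ i) : reward i < reward (i + 1) := by
  rw [← sub_pos, reward_succ_sub hi]; positivity

lemma cost_succ_sub {i : ℕ} (hi : 1 ≤ i) :
    cost (i + 1) - cost i = breakpoint i * (reward (i + 1) - reward i) := by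
  obtain ⟨j, rfl⟩ := Nat.exists_eq_add_of_le' hi
  rw [reward_succ_sub hi]
  simp only [cost, Nat.add_sub_cancel]
  push_cast
  linear_combination (1 / 2 : ℝ) * one_sub_breakpoint_mul (j + 1)

lemma indiff_eq {i : ℕ} (hi : 1 ≤ i) : indiff cost reward i = breakpoint i := by
  rw [indiff, cost_succ_sub hi, mul_div_assoc, div_self (sub_pos.2 (reward_lt_succ hi)).ne',
    mul_one]

lemma bp_eq (j : ℕ) : bp cost reward j = breakpoint j := by
  rcases Nat.eq_zero_or_pos j with rfl | hj
  · rw [bp, if_pos rfl, breakpoint_zero]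
  · rw [bp, if_neg hj.ne', indiff_eq hj]

lemma linInstance {n : ℕ} (hn : 2 ≤ n) : LinInstance n cost reward := by
  refine ⟨hn, by simp [cost], (reward_pos 1).le, fun i hi _ => ?_, fun i hi _ => reward_lt_succ hi,
    ?_, fun i hi _ => ?_, ?_⟩
  · rw [← sub_pos, cost_succ_sub hi]
    exact mul_pos (breakpoint_pos hi) (sub_pos.2 (reward_lt_succ hi))
  · rw [indiff_eq le_rfl]; exact breakpoint_pos le_rfl
  · rw [indiff_eq hi, indiff_eq (by omega)]; exact breakpoint_strictMono (by omega)
  · rw [indiff_eq (by omega)]; exact breakpoint_le_one _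

lemma mem_BR {n i : ℕ} (hi : i ∈ Icc 1 n) {x : ℝ} (hl : breakpoint (i - 1) ≤ x)
    (hr : x ≤ breakpoint i) : i ∈ BR n cost reward x :=
  mem_BR_of_indiff (fun _ hl _ => reward_lt_succ hl) hi
    (fun l hl1 hli => by
      rw [indiff_eq hl1]; exact (breakpoint_strictMono.monotone (by omega)).trans hl)
    (fun l hil _ => by
      rw [indiff_eq (by grind)]; exact hr.trans (breakpoint_strictMono.monotone hil))

lemma static_util_eq_one (i : ℕ) : (1 - bp cost reward (i - 1)) * reward i = 1 := by
  rw [bp_eq, reward, one_sub_breakpoint_mul]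

lemma agent_util_at_breakpoint (j : ℕ) : breakpoint j * reward (j + 1) - cost (j + 1) = j / 2 := by
  simp only [reward, cost, Nat.add_sub_cancel]
  push_cast
  linear_combination -one_sub_breakpoint_mul j

/-- The durations make the elapsed time after `k` segments equal to
`breakpoint (n - 1) / breakpoint (n - k)`, so that the average contract is `breakpoint (n - k)`. -/
noncomputable def freeFall (n : ℕ) : DLC where
  K := n - n / 2
  α k := if k = 1 then breakpoint (n - 1) else 0
  τ k := if k = 1 then 1 else
    breakpoint (n - 1) * ((breakpoint (n - k))⁻¹ - (breakpoint (n - k + 1))⁻¹)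
  a k := n + 1 - k

variable {n : ℕ}

lemma freeFall_isFreeFall : (freeFall n).FreeFall := fun k hk _ => if_neg (by omega)

lemma freeFall_τ_pos (hn : 2 ≤ n) {k : ℕ} (hk : k ∈ Icc 1 (n - 1)) : 0 < (freeFall n).τ k := by
  obtain ⟨hk1, hkn⟩ := mem_Icc.1 hk
  rcases hk1.eq_or_lt with rfl | hk2
  · simp [freeFall]
  · simp only [freeFall, if_neg hk2.ne']
    have := breakpoint_pos (j := n - k) (by omega)
    exact mul_pos (breakpoint_pos (by omega)) (sub_pos.2 (inv_strictAnti₀ this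
      (breakpoint_strictMono (Nat.lt_succ_self _))))

lemma freeFall_Tsum (hn : 2 ≤ n) {k : ℕ} (hk : 1 ≤ k) (hkn : k ≤ n) :
    (freeFall n).Tsum k = breakpoint (n - 1) / breakpoint (n - k) := by
  induction k, hk using Nat.le_induction with
  | base => simp [DLC.Tsum, freeFall, (breakpoint_pos (j := n - 1) (by omega)).ne']
  | succ k hk ih =>
    rw [DLC.Tsum_succ, ih (by omega)]
    simp only [freeFall, if_neg (show k + 1 ≠ 1 by omega), show n - (k + 1) + 1 = n - k by omega]
    ring

lemma freeFall_avg (hn : 2 ≤ n) {k : ℕ} (hk : 1 ≤ k) (hkK : k ≤ n - n / 2) :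
    (freeFall n).avg k = breakpoint (n - k) := by
  have hα : (freeFall n).α 1 = breakpoint (n - 1) := by simp [freeFall]
  have hτ : (freeFall n).τ 1 = 1 := by simp [freeFall]
  rw [DLC.avg, freeFall_isFreeFall.Asum_eq hk hkK, freeFall_Tsum hn hk (by omega), hα, hτ, mul_one]
  field_simp [(breakpoint_pos (j := n - 1) (by omega)).ne',
    (breakpoint_pos (j := n - k) (by omega)).ne']

lemma freeFall_valid (hn : 2 ≤ n) : (freeFall n).Valid n cost reward := by
  have hK : (freeFall n).K = n - n / 2 := rfl
  have hbr {k : ℕ} (hk : 1 ≤ k) (hkn : k < n) {x : ℝ} (hl : breakpoint (n - k) ≤ x)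
      (hr : x ≤ breakpoint (n + 1 - k)) : (freeFall n).a k ∈ BR n cost reward x :=
    show n + 1 - k ∈ _ from mem_BR (mem_Icc.2 ⟨by omega, by omega⟩)
      (by rwa [show n + 1 - k - 1 = n - k by omega]) hr
  refine ⟨by omega, fun k hk => ?_, fun k hk => ?_, fun k hk hkK => ?_⟩
  · obtain ⟨hk1, hkK⟩ := mem_Icc.1 hk
    refine ⟨?_, freeFall_τ_pos hn (mem_Icc.2 ⟨hk1, by omega⟩),
      (show n + 1 - k ∈ Icc 1 n from mem_Icc.2 ⟨by omega, by omega⟩)⟩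
    simp only [freeFall]
    split_ifs
    · exact (breakpoint_pos (by omega)).le
    · exact le_rfl
  · obtain ⟨hk1, hkK⟩ := mem_Icc.1 hk
    rw [freeFall_avg hn hk1 hkK]
    exact hbr hk1 (by omega) le_rfl (breakpoint_strictMono.monotone (by omega))
  · rw [freeFall_avg hn (by omega) (by omega)]
    exact hbr (by omega) (by omega) (breakpoint_strictMono.monotone (by omega))
      (breakpoint_strictMono.monotone (by omega))

lemma pow_le_inv_breakpoint_sub {j : ℕ} (hj : 1 ≤ j) :
    (1 / 2) ^ (j + 1) ≤ (breakpoint j)⁻¹ - (breakpoint (j + 1))⁻¹ := by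
  have h₀ := breakpoint_pos hj
  have h₁ := breakpoint_pos (j := j + 1) (by omega)
  rw [inv_sub_inv h₀.ne' h₁.ne', breakpoint_succ_sub, le_div_iff₀ (by positivity)]
  exact mul_le_of_le_one_right (by positivity)
    (mul_le_one₀ (breakpoint_le_one _) h₁.le (breakpoint_le_one _))

variable {n : ℕ}

lemma freeFall_segment_payoff (hn : 2 ≤ n) {k : ℕ} (hk : k ∈ Icc 1 (n - n / 2)) :
    1 / 4 ≤ (freeFall n).τ k * (1 - (freeFall n).α k) * reward ((freeFall n).a k) := by
  obtain ⟨hk1, hkK⟩ := mem_Icc.1 hk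
  rcases hk1.eq_or_lt with rfl | hk2
  · have hpay : (1 - breakpoint (n - 1)) * reward n = 1 := by
      simpa [bp_eq] using static_util_eq_one n
    simp only [freeFall, if_true, one_mul, show n + 1 - 1 = n by omega, hpay]
    norm_num
  · obtain ⟨j, hj, rfl⟩ : ∃ j, 1 ≤ j ∧ k = n - j := ⟨n - k, by omega, by omega⟩
    simp only [freeFall, if_neg hk2.ne', sub_zero, mul_one, reward,
      show n + 1 - (n - j) - 1 = j by omega, show n - (n - j) = j by omega]
    have hτ := mul_le_mul (half_le_breakpoint (j := n - 1) (by omega))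
      (pow_le_inv_breakpoint_sub hj) (by positivity) (breakpoint_pos (by omega)).le
    have hcancel : (1 / 2 : ℝ) ^ j * 2 ^ j = 1 := by rw [← mul_pow]; norm_num
    calc (1 / 4 : ℝ) = 1 / 2 * (1 / 2) ^ (j + 1) * 2 ^ j := by
          rw [pow_succ]; linear_combination (-1 / 4 : ℝ) * hcancel
      _ ≤ _ := mul_le_mul_of_nonneg_right hτ (by positivity)

lemma freeFall_Tsum_le_two (hn : 2 ≤ n) : (freeFall n).Tsum (freeFall n).K ≤ 2 := by
  have hK : (freeFall n).K = n - n / 2 := rfl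
  have hm : 1 ≤ n - (n - n / 2) := by omega
  rw [hK, freeFall_Tsum hn (by omega) (by omega), div_le_iff₀ (breakpoint_pos hm)]
  linarith [breakpoint_le_one (n - 1), half_le_breakpoint hm]

lemma freeFall_util (hn : 2 ≤ n) : n / 16 ≤ (freeFall n).Util reward := by
  have hK : (freeFall n).K = n - n / 2 := rfl
  have hT := (freeFall_valid hn).Tsum_pos (freeFall_valid hn).1 le_rfl
  refine le_trans ?_ (DLC.le_util_of_forall_le (by norm_num) hT (freeFall_Tsum_le_two hn)
    fun k hk => freeFall_segment_payoff hn (hK ▸ hk))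
  have : (n : ℝ) ≤ 2 * (n - n / 2 : ℕ) := by exact_mod_cast (by omega : n ≤ 2 * (n - n / 2))
  rw [hK]
  linarith

lemma freeFall_utilA (hn : 2 ≤ n) : (freeFall n).UtilA cost reward = (n / 2 : ℕ) / 2 := by
  have hK : (freeFall n).K = n - n / 2 := rfl
  rw [(freeFall_valid hn).utilA_eq, hK, freeFall_avg hn (by omega) le_rfl]
  simp only [freeFall, show n + 1 - (n - n / 2) = n / 2 + 1 by omega,
    show n - (n - n / 2) = n / 2 by omega]
  exact agent_util_at_breakpoint _

end Doubling

lemma logb_two_natCast_lt {n : ℕ} (hn : 0 < n) : Real.logb 2 n < n := by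
  rw [Real.logb_lt_iff_lt_rpow one_lt_two (by exact_mod_cast hn), Real.rpow_natCast]
  exact_mod_cast n.lt_two_pow_self

/-- There are universal constants `c₁, c₂ > 0` and `N₀` such
that for every `n ≥ N₀` some linear contract instance with `n` actions has:
(i) optimal static principal utility `R⋆ = max_i (1 − α_{i-1,i})·R_i ∈ [1, 2]`,
with an optimal static contract under which the agent's best-response utility
is `0`; and (ii) a valid free-fall dynamic linear contract giving the principal
at least `c₁·n` and the agent at least `c₂·log₂ n` (time-averaged). -/
theorem unbounded_win_win :
    ∃ (c₁ c₂ : ℝ) (N₀ : ℕ), 0 < c₁ ∧ 0 < c₂ ∧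
      ∀ n, N₀ ≤ n → ∃ c R : ℕ → ℝ, LinInstance n c R ∧
        ∃ Rstar : ℝ,
          IsGreatest ((fun i => (1 - bp c R (i - 1)) * R i) '' Set.Icc 1 n) Rstar ∧
          1 ≤ Rstar ∧ Rstar ≤ 2 ∧
          (∃ αstar : ℝ, 0 ≤ αstar ∧ ∃ i, i ∈ BR n c R αstar ∧
            (1 - αstar) * R i = Rstar ∧ αstar * R i - c i = 0) ∧
          ∃ π : DLC, π.Valid n c R ∧ π.FreeFall ∧
            π.Util R ≥ c₁ * n ∧ π.UtilA c R ≥ c₂ * Real.logb 2 n := by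
  open Doubling in
  refine ⟨1 / 16, 1 / 8, 2, by norm_num, by norm_num, fun n hn => ?_⟩
  have hstatic : IsGreatest ((fun i => (1 - bp cost reward (i - 1)) * reward i) '' Set.Icc 1 n) 1 :=
    ⟨⟨1, ⟨le_rfl, by omega⟩, static_util_eq_one 1⟩,
      by rintro _ ⟨i, -, rfl⟩; exact (static_util_eq_one i).le⟩
  have hzero : 1 ∈ BR n cost reward 0 :=
    mem_BR (mem_Icc.2 ⟨le_rfl, by omega⟩) breakpoint_zero.le (breakpoint_pos le_rfl).le
  have hlog := logb_two_natCast_lt (n := n) (by omega)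
  have hhalf : (n : ℝ) ≤ 4 * (n / 2 : ℕ) := by exact_mod_cast (by omega : n ≤ 4 * (n / 2))
  refine ⟨cost, reward, linInstance hn, 1, hstatic, le_rfl, by norm_num,
    ⟨0, le_rfl, 1, hzero, by simp [reward], by simp [cost]⟩, freeFall n, freeFall_valid hn,
    freeFall_isFreeFall, by linarith [freeFall_util hn], ?_⟩
  rw [freeFall_utilA hn]
  linarith
end

section
/- Assume that for every action i there exists a contract q ∈ ℝ^m with all coordinates strictly positive such that BR(q) = {i}. Then for every valid dynamic contract π with Util(π) ≥ 0 and every ε > 0, there exists a valid dynamic contract π₀ such that Util₀(π₀) ≥ (1 − ε)·Util(π), where Util₀ counts only the utility contributed by non-degenerate segments. -/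
open Finset

/-- Agent's utility `u_A(p, i) = Σ_j F_{ij} p_j − c_i` from action `i` under
contract `p`. -/
noncomputable def uA (m : ℕ) (c : ℕ → ℝ) (F : ℕ → ℕ → ℝ) (p : ℕ → ℝ) (i : ℕ) : ℝ :=
  (∑ j ∈ Finset.Icc 1 m, F i j * p j) - c i

/-- Principal's utility `u_P(p, i) = Σ_j F_{ij} (r_j − p_j)`. -/
noncomputable def uP (m : ℕ) (F : ℕ → ℕ → ℝ) (r : ℕ → ℝ) (p : ℕ → ℝ) (i : ℕ) : ℝ :=
  ∑ j ∈ Finset.Icc 1 m, F i j * (r j - p j)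

/-- Best-response set of the agent to contract `p`. -/
def BRg (n m : ℕ) (c : ℕ → ℝ) (F : ℕ → ℕ → ℝ) (p : ℕ → ℝ) : Set ℕ :=
  {i | i ∈ Finset.Icc 1 n ∧ ∀ j ∈ Finset.Icc 1 n, uA m c F p j ≤ uA m c F p i}

/-- A general dynamic contract with `K` segments (indexed `1,…,K`):
contracts `p k : ℕ → ℝ` (coordinates `1,…,m`), durations `τ`, actions `a`. -/
structure DGC where
  K : ℕ
  p : ℕ → ℕ → ℝ
  τ : ℕ → ℝ
  a : ℕ → ℕ

namespace DGC

/-- Total duration of the first `k` segments. -/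
noncomputable def Tsum (π : DGC) (k : ℕ) : ℝ := ∑ j ∈ Finset.Icc 1 k, π.τ j

/-- Historical average contract `ρ^k` after the first `k` segments, with the
convention `ρ^0 := p^1`. -/
noncomputable def rho (π : DGC) (k : ℕ) (j : ℕ) : ℝ :=
  if k = 0 then π.p 1 j
  else (∑ k' ∈ Finset.Icc 1 k, π.τ k' * π.p k' j) / π.Tsum k

/-- Validity of a general dynamic contract. -/
def Valid (n m : ℕ) (c : ℕ → ℝ) (F : ℕ → ℕ → ℝ) (π : DGC) : Prop :=
  1 ≤ π.K ∧
    (∀ k ∈ Finset.Icc 1 π.K,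
      (∀ j ∈ Finset.Icc 1 m, 0 ≤ π.p k j) ∧ 0 < π.τ k ∧ π.a k ∈ Finset.Icc 1 n) ∧
    (∀ k ∈ Finset.Icc 1 π.K, π.a k ∈ BRg n m c F (π.rho k)) ∧
    (∀ k, 2 ≤ k → k ≤ π.K → π.a k ∈ BRg n m c F (π.rho (k - 1)))

/-- Time-averaged principal utility. -/
noncomputable def Util (m : ℕ) (F : ℕ → ℕ → ℝ) (r : ℕ → ℝ) (π : DGC) : ℝ :=
  (∑ k ∈ Finset.Icc 1 π.K, π.τ k * uP m F r (π.p k) (π.a k)) / π.Tsum π.K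

/-- Segment `k` is degenerate if `BR(ρ^{k-1}) ∩ BR(ρ^k)` has at least two
elements (with `ρ^0 := p^1`). -/
def Degenerate (n m : ℕ) (c : ℕ → ℝ) (F : ℕ → ℕ → ℝ) (π : DGC) (k : ℕ) : Prop :=
  ∃ i j, i ≠ j ∧
    i ∈ BRg n m c F (π.rho (k - 1)) ∩ BRg n m c F (π.rho k) ∧
    j ∈ BRg n m c F (π.rho (k - 1)) ∩ BRg n m c F (π.rho k)

open scoped Classical in
/-- Time-averaged principal utility counting only non-degenerate segments. -/
noncomputable def Util0 (n m : ℕ) (c : ℕ → ℝ) (F : ℕ → ℕ → ℝ) (r : ℕ → ℝ)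
    (π : DGC) : ℝ :=
  (∑ k ∈ Finset.Icc 1 π.K,
    if Degenerate n m c F π k then 0 else π.τ k * uP m F r (π.p k) (π.a k)) /
    π.Tsum π.K

/-- Free-fall: the zero contract is offered on every segment after the first. -/
def FreeFall (π : DGC) : Prop := ∀ k, 2 ≤ k → k ≤ π.K → ∀ j, π.p k j = 0

end DGC

/-!
If `Util(π) = 0`, one segment offering the zero contract suffices. Otherwise split every segment
of `π` into two halves: halfway through segment `k` the running average is a convex combination
of `ρ^{k-1}` and `ρ^k`, so `a^k` is still a best response there. Mix this split contract, with a
small weight `γ`, with a contract whose running averages are `ρ^k` at the end of segment `k` and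
`q(a^k)` halfway through it, both shifted by constant vectors. Running averages mix like the
contracts, and constant shifts do not change best responses because the rows of `F` sum to one.
So at the end of segment `k` the best responses are those at `ρ^k`, while halfway through they
reduce to `{a^k}` because `q(a^k)` incentivizes `a^k` uniquely. Every segment thus has a singleton
best response at one of its endpoints, hence is non-degenerate, and the utility is affine in `γ`,
equal to `Util(π)` at `γ = 0`.
-/

theorem sum_Icc_two_mul_ceil_half (f : ℕ → ℝ) (k : ℕ) :
    ∑ l ∈ Icc 1 (2 * k), f ((l + 1) / 2) / 2 = ∑ i ∈ Icc 1 k, f i := by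
  induction k with
  | zero => simp
  | succ k ih =>
    rw [show 2 * (k + 1) = 2 * k + 1 + 1 by ring, sum_Icc_succ_top (by omega),
      sum_Icc_succ_top (by omega), ih, sum_Icc_succ_top (by omega),
      show (2 * k + 1 + 1) / 2 = k + 1 by omega, show (2 * k + 1 + 1 + 1) / 2 = k + 1 by omega]
    ring

theorem exists_nonneg_forall_le {α : Type*} (s : Finset α) (f : α → ℝ) :
    ∃ C, 0 ≤ C ∧ ∀ x ∈ s, f x ≤ C :=
  ⟨∑ x ∈ s, |f x|, sum_nonneg fun _ _ => abs_nonneg _,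
    fun _ hx => (le_abs_self _).trans (single_le_sum (fun y _ => abs_nonneg (f y)) hx)⟩

theorem exists_mem_Ioc_mul_le (D : ℝ) {b : ℝ} (hb : 0 < b) :
    ∃ γ ∈ Set.Ioc (0 : ℝ) 1, γ * D ≤ b := by
  refine ⟨min 1 (b / (|D| + 1)), ⟨lt_min one_pos (by positivity), min_le_left _ _⟩, ?_⟩
  calc min 1 (b / (|D| + 1)) * D ≤ min 1 (b / (|D| + 1)) * (|D| + 1) :=
        mul_le_mul_of_nonneg_left (by linarith [le_abs_self D]) (by positivity)
    _ ≤ b / (|D| + 1) * (|D| + 1) :=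
        mul_le_mul_of_nonneg_right (min_le_right _ _) (by positivity)
    _ = b := div_mul_cancel₀ _ (by positivity)

theorem drift_increment_nonneg {T T' x y C s : ℝ} (hT' : 0 ≤ T') (hTT' : T' ≤ T) (hx : 0 ≤ x)
    (hy : y ≤ C) (hC : 0 ≤ C) (hs : 0 ≤ s) :
    0 ≤ T * (x + (s + 1) * C) - T' * (y + s * C) := by
  rw [show T * (x + (s + 1) * C) - T' * (y + s * C) =
      T * x + (T - T') * ((s + 1) * C) + T' * (C - y) by ring]
  exact add_nonneg (add_nonneg (mul_nonneg (hT'.trans hTT') hx)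
    (mul_nonneg (sub_nonneg.2 hTT') (by positivity))) (mul_nonneg hT' (sub_nonneg.2 hy))

section Utility

variable {n m : ℕ} {c : ℕ → ℝ} {F : ℕ → ℕ → ℝ}

theorem uA_convex_comb (w w' : ℕ → ℝ) (i : ℕ) {α β : ℝ} (h : α + β = 1) :
    uA m c F (fun j => α * w j + β * w' j) i = α * uA m c F w i + β * uA m c F w' i := by
  simp only [uA, mul_add, sum_add_distrib, mul_left_comm _ α, mul_left_comm _ β, ← mul_sum]
  linear_combination c i * h

theorem uA_add_const (w : ℕ → ℝ) (t : ℝ) {i : ℕ} (hi : ∑ j ∈ Icc 1 m, F i j = 1) :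
    uA m c F (fun j => w j + t) i = uA m c F w i + t := by
  simp only [uA, mul_add, sum_add_distrib, ← sum_mul, hi]
  ring

theorem uP_convex_comb (r p p' : ℕ → ℝ) (i : ℕ) (γ : ℝ) :
    uP m F r (fun j => (1 - γ) * p j + γ * p' j) i =
      (1 - γ) * uP m F r p i + γ * uP m F r p' i := by
  simp only [uP, mul_sum, ← sum_add_distrib]
  exact sum_congr rfl fun j _ => by ring

theorem BRg_add_const (hF : ∀ i ∈ Icc 1 n, ∑ j ∈ Icc 1 m, F i j = 1) (w : ℕ → ℝ) (t : ℝ) :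
    BRg n m c F (fun j => w j + t) = BRg n m c F w := by
  ext i
  refine and_congr_right fun hi => forall₂_congr fun j hj => ?_
  rw [uA_add_const w t (hF j hj), uA_add_const w t (hF i hi), add_le_add_iff_right]

theorem mem_BRg_convex_comb {w w' : ℕ → ℝ} {a : ℕ} {α β : ℝ} (hα : 0 ≤ α) (hβ : 0 ≤ β)
    (hαβ : α + β = 1) (ha : a ∈ BRg n m c F w) (ha' : a ∈ BRg n m c F w') :
    a ∈ BRg n m c F (fun j => α * w j + β * w' j) := by
  refine ⟨ha.1, fun j hj => ?_⟩
  rw [uA_convex_comb w w' j hαβ, uA_convex_comb w w' a hαβ]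
  exact add_le_add (mul_le_mul_of_nonneg_left (ha.2 j hj) hα)
    (mul_le_mul_of_nonneg_left (ha'.2 j hj) hβ)

theorem uA_lt_of_BRg_eq_singleton {q : ℕ → ℝ} {a x : ℕ} (hq : BRg n m c F q = {a})
    (hx : x ∈ Icc 1 n) (hxa : x ≠ a) : uA m c F q x < uA m c F q a := by
  have ha : a ∈ BRg n m c F q := hq ▸ rfl
  have hx' : ¬ ∀ j ∈ Icc 1 n, uA m c F q j ≤ uA m c F q x := fun h =>
    hxa (by rw [← Set.mem_singleton_iff, ← hq]; exact ⟨hx, h⟩)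
  push Not at hx'
  obtain ⟨j, hj, hlt⟩ := hx'
  exact hlt.trans_le (ha.2 j hj)

theorem BRg_convex_comb_eq_singleton {w q : ℕ → ℝ} {a : ℕ} {γ : ℝ} (hγ : γ ∈ Set.Ioc 0 1)
    (ha : a ∈ BRg n m c F w) (hq : BRg n m c F q = {a}) :
    BRg n m c F (fun j => (1 - γ) * w j + γ * q j) = {a} := by
  have hγ1 : 0 ≤ 1 - γ := sub_nonneg.2 hγ.2
  refine Set.eq_singleton_iff_unique_mem.2
    ⟨mem_BRg_convex_comb hγ1 hγ.1.le (by ring) ha (hq ▸ rfl), fun x hx => ?_⟩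
  by_contra hxa
  have hle := hx.2 a ha.1
  rw [uA_convex_comb w q x (by ring), uA_convex_comb w q a (by ring)] at hle
  have hw := mul_le_mul_of_nonneg_left (ha.2 x hx.1) hγ1
  have hq' := mul_lt_mul_of_pos_left (uA_lt_of_BRg_eq_singleton hq hx.1 hxa) hγ.1
  linarith

end Utility

namespace DGC

noncomputable def cumPay (π : DGC) (k j : ℕ) : ℝ := ∑ i ∈ Icc 1 k, π.τ i * π.p i j

variable {n m : ℕ} {c : ℕ → ℝ} {F : ℕ → ℕ → ℝ} {r : ℕ → ℝ} {π : DGC}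

@[simp] theorem Tsum_zero (π : DGC) : π.Tsum 0 = 0 := by simp [Tsum]

@[simp] theorem cumPay_zero (π : DGC) (j : ℕ) : π.cumPay 0 j = 0 := by simp [cumPay]

theorem Tsum_succ (π : DGC) (k : ℕ) : π.Tsum (k + 1) = π.Tsum k + π.τ (k + 1) :=
  sum_Icc_succ_top (by omega) _

theorem cumPay_succ (π : DGC) (k j : ℕ) :
    π.cumPay (k + 1) j = π.cumPay k j + π.τ (k + 1) * π.p (k + 1) j :=
  sum_Icc_succ_top (by omega) _

theorem rho_eq_div (π : DGC) {k : ℕ} (hk : k ≠ 0) (j : ℕ) :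
    π.rho k j = π.cumPay k j / π.Tsum k :=
  if_neg hk

theorem Tsum_nonneg {k : ℕ} (hτ : ∀ i ∈ Icc 1 k, 0 < π.τ i) : 0 ≤ π.Tsum k :=
  sum_nonneg fun i hi => (hτ i hi).le

theorem Tsum_pos {k : ℕ} (hτ : ∀ i ∈ Icc 1 k, 0 < π.τ i) (hk : k ≠ 0) : 0 < π.Tsum k :=
  sum_pos hτ (nonempty_Icc.2 (by omega))

theorem Tsum_mul_rho {k : ℕ} (hτ : ∀ i ∈ Icc 1 k, 0 < π.τ i) (j : ℕ) :
    π.Tsum k * π.rho k j = π.cumPay k j := by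
  rcases eq_or_ne k 0 with rfl | hk
  · simp
  · rw [rho_eq_div π hk, mul_div_cancel₀ _ (Tsum_pos hτ hk).ne']

theorem rho_one (h : π.τ 1 ≠ 0) : π.rho 1 = π.rho 0 := by
  funext j
  simp [rho, Tsum, h]

theorem Util0_eq_Util (h : ∀ k ∈ Icc 1 π.K, ¬π.Degenerate n m c F k) :
    π.Util0 n m c F r = π.Util m F r := by
  unfold Util0 Util
  congr 1
  exact sum_congr rfl fun k hk => if_neg (h k hk)

theorem not_degenerate_of_BRg_inter_eq_singleton {k i : ℕ}
    (h : BRg n m c F (π.rho (k - 1)) ∩ BRg n m c F (π.rho k) = {i}) :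
    ¬π.Degenerate n m c F k := by
  rintro ⟨x, y, hxy, hx, hy⟩
  rw [h] at hx hy
  exact hxy (hx.trans hy.symm)

theorem valid_of_BRg_inter_eq_singleton (hK : 1 ≤ π.K)
    (hseg : ∀ k ∈ Icc 1 π.K,
      (∀ j ∈ Icc 1 m, 0 ≤ π.p k j) ∧ 0 < π.τ k ∧ π.a k ∈ Icc 1 n)
    (hBR : ∀ k ∈ Icc 1 π.K,
      BRg n m c F (π.rho (k - 1)) ∩ BRg n m c F (π.rho k) = {π.a k}) :
    π.Valid n m c F := by
  have hmem : ∀ k ∈ Icc 1 π.K,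
      π.a k ∈ BRg n m c F (π.rho (k - 1)) ∩ BRg n m c F (π.rho k) :=
    fun k hk => (hBR k hk).symm ▸ rfl
  exact ⟨hK, hseg, fun k hk => (hmem k hk).2,
    fun k hk hkK => (hmem k (mem_Icc.2 ⟨by omega, hkK⟩)).1⟩

namespace Valid

theorem tau_pos (hπ : π.Valid n m c F) {k : ℕ} (hk : k ∈ Icc 1 π.K) : 0 < π.τ k :=
  (hπ.2.1 k hk).2.1

theorem tau_pos_of_le (hπ : π.Valid n m c F) {k : ℕ} (hk : k ≤ π.K) :
    ∀ i ∈ Icc 1 k, 0 < π.τ i :=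
  fun _ hi => hπ.tau_pos (Icc_subset_Icc_right hk hi)

theorem p_nonneg (hπ : π.Valid n m c F) {k j : ℕ} (hk : k ∈ Icc 1 π.K) (hj : j ∈ Icc 1 m) :
    0 ≤ π.p k j :=
  (hπ.2.1 k hk).1 j hj

theorem a_mem (hπ : π.Valid n m c F) {k : ℕ} (hk : k ∈ Icc 1 π.K) : π.a k ∈ Icc 1 n :=
  (hπ.2.1 k hk).2.2

theorem mem_BRg_rho (hπ : π.Valid n m c F) {k : ℕ} (hk : k ∈ Icc 1 π.K) :
    π.a k ∈ BRg n m c F (π.rho k) :=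
  hπ.2.2.1 k hk

theorem mem_BRg_rho_sub_one (hπ : π.Valid n m c F) {k : ℕ} (hk : k ∈ Icc 1 π.K) :
    π.a k ∈ BRg n m c F (π.rho (k - 1)) := by
  obtain ⟨hk1, hkK⟩ := mem_Icc.1 hk
  rcases hk1.eq_or_lt with rfl | hk2
  · rw [Nat.sub_self, ← rho_one (hπ.tau_pos hk).ne']
    exact hπ.mem_BRg_rho hk
  · exact hπ.2.2.2 k hk2 hkK

theorem rho_nonneg (hπ : π.Valid n m c F) {k j : ℕ} (hk : k ≤ π.K) (hj : j ∈ Icc 1 m) :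
    0 ≤ π.rho k j := by
  rcases eq_or_ne k 0 with rfl | hk0
  · exact hπ.p_nonneg (mem_Icc.2 ⟨le_rfl, hπ.1⟩) hj
  · rw [rho_eq_div π hk0]
    refine div_nonneg (sum_nonneg fun i hi => ?_) (Tsum_nonneg (hπ.tau_pos_of_le hk))
    have hi' := Icc_subset_Icc_right hk hi
    exact mul_nonneg (hπ.tau_pos hi').le (hπ.p_nonneg hi' hj)

end Valid

noncomputable def split (π : DGC) : DGC where
  K := 2 * π.K
  p l := π.p ((l + 1) / 2)
  τ l := π.τ ((l + 1) / 2) / 2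
  a l := π.a ((l + 1) / 2)

theorem Tsum_split_two_mul (π : DGC) (k : ℕ) : π.split.Tsum (2 * k) = π.Tsum k :=
  sum_Icc_two_mul_ceil_half π.τ k

theorem Tsum_split_two_mul_add_one (π : DGC) (k : ℕ) :
    π.split.Tsum (2 * k + 1) = π.Tsum k + π.τ (k + 1) / 2 := by
  rw [Tsum_succ, Tsum_split_two_mul]
  simp only [split, show (2 * k + 1 + 1) / 2 = k + 1 by omega]

theorem cumPay_split_two_mul (π : DGC) (k j : ℕ) : π.split.cumPay (2 * k) j = π.cumPay k j := by
  simp only [cumPay, split, div_mul_eq_mul_div]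
  exact sum_Icc_two_mul_ceil_half (fun i => π.τ i * π.p i j) k

theorem cumPay_split_two_mul_add_one (π : DGC) (k j : ℕ) :
    π.split.cumPay (2 * k + 1) j = π.cumPay k j + π.τ (k + 1) / 2 * π.p (k + 1) j := by
  rw [cumPay_succ, cumPay_split_two_mul]
  simp only [split, show (2 * k + 1 + 1) / 2 = k + 1 by omega]

theorem Util_split (π : DGC) : π.split.Util m F r = π.Util m F r := by
  unfold Util
  rw [show π.split.K = 2 * π.K from rfl, Tsum_split_two_mul]
  congr 1
  simp only [split, div_mul_eq_mul_div]
  exact sum_Icc_two_mul_ceil_half (fun i => π.τ i * uP m F r (π.p i) (π.a i)) π.K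

theorem Valid.tau_split_pos (hπ : π.Valid n m c F) : ∀ l ∈ Icc 1 (2 * π.K), 0 < π.split.τ l :=
  fun l hl => half_pos (hπ.tau_pos (by simp only [mem_Icc] at hl ⊢; omega))

theorem rho_split_two_mul (π : DGC) {k : ℕ} (hk : k ≠ 0) :
    π.split.rho (2 * k) = π.rho k := by
  funext j
  rw [rho_eq_div _ (by omega), rho_eq_div _ hk, cumPay_split_two_mul, Tsum_split_two_mul]

theorem rho_split_two_mul_add_one {k : ℕ} (hτ : ∀ i ∈ Icc 1 (k + 1), 0 < π.τ i) :
    π.split.rho (2 * k + 1) = fun j =>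
      π.Tsum k / (π.Tsum k + π.Tsum (k + 1)) * π.rho k j
        + π.Tsum (k + 1) / (π.Tsum k + π.Tsum (k + 1)) * π.rho (k + 1) j := by
  funext j
  have hτk : ∀ i ∈ Icc 1 k, 0 < π.τ i := fun i hi => hτ i (Icc_subset_Icc_right (by omega) hi)
  have hT : 0 ≤ π.Tsum k := Tsum_nonneg hτk
  have hτ₁ : 0 < π.τ (k + 1) := hτ (k + 1) (by simp)
  have h₁ := Tsum_mul_rho hτk j
  have h₂ := Tsum_mul_rho hτ j
  rw [cumPay_succ, ← h₁] at h₂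
  rw [rho_eq_div _ (by omega), cumPay_split_two_mul_add_one, Tsum_split_two_mul_add_one, ← h₁,
    div_mul_eq_mul_div _ _ (π.rho k j), div_mul_eq_mul_div _ _ (π.rho (k + 1) j), ← add_div, h₂,
    Tsum_succ, div_eq_div_iff (by positivity) (by positivity)]
  ring

theorem Valid.mem_BRg_rho_split (hπ : π.Valid n m c F) {k : ℕ} (hk : k < π.K) :
    π.a (k + 1) ∈ BRg n m c F (π.split.rho (2 * k + 1)) := by
  have hτ := hπ.tau_pos_of_le (Nat.succ_le_of_lt hk)
  have hk1 : k + 1 ∈ Icc 1 π.K := mem_Icc.2 ⟨by omega, hk⟩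
  have hT : 0 ≤ π.Tsum k := Tsum_nonneg fun i hi => hτ i (Icc_subset_Icc_right (by omega) hi)
  have hS : 0 < π.Tsum k + π.Tsum (k + 1) := add_pos_of_nonneg_of_pos hT (Tsum_pos hτ (by omega))
  rw [rho_split_two_mul_add_one hτ]
  exact mem_BRg_convex_comb (div_nonneg hT hS.le) (div_nonneg (Tsum_nonneg hτ) hS.le)
    (by rw [← add_div, div_self hS.ne']) (hπ.mem_BRg_rho_sub_one hk1) (hπ.mem_BRg_rho hk1)

/-- Durations and actions of `π`, with payments chosen so that the running average after
segment `l ≥ 1` is `g l`. -/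
noncomputable def withAverages (π : DGC) (g : ℕ → ℕ → ℝ) : DGC :=
  { π with p := fun l j => (π.Tsum l * g l j - π.Tsum (l - 1) * g (l - 1) j) / π.τ l }

theorem cumPay_withAverages (g : ℕ → ℕ → ℝ) {k : ℕ} (hτ : ∀ i ∈ Icc 1 k, 0 < π.τ i) (j : ℕ) :
    (π.withAverages g).cumPay k j = π.Tsum k * g k j := by
  induction k with
  | zero => simp
  | succ k ih =>
    rw [cumPay_succ, ih fun i hi => hτ i (Icc_subset_Icc_right (by omega) hi)]
    simp only [withAverages, Nat.add_sub_cancel]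
    rw [mul_div_cancel₀ _ (hτ (k + 1) (by simp)).ne']
    ring

theorem rho_withAverages (g : ℕ → ℕ → ℝ) {k : ℕ} (hτ : ∀ i ∈ Icc 1 k, 0 < π.τ i)
    (hk : k ≠ 0) : (π.withAverages g).rho k = g k := by
  funext j
  rw [rho_eq_div _ hk, cumPay_withAverages g hτ]
  exact mul_div_cancel_left₀ _ (Tsum_pos hτ hk).ne'

noncomputable def mix (γ : ℝ) (π π' : DGC) : DGC :=
  { π with p := fun k j => (1 - γ) * π.p k j + γ * π'.p k j }

theorem rho_mix (γ : ℝ) (π₁ π₂ : DGC) (hτ : π₂.τ = π₁.τ) (k j : ℕ) :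
    (mix γ π₁ π₂).rho k j = (1 - γ) * π₁.rho k j + γ * π₂.rho k j := by
  simp only [rho, mix, Tsum, hτ]
  split_ifs
  · rfl
  · simp only [mul_add, sum_add_distrib, mul_left_comm _ (1 - γ), mul_left_comm _ γ, ← mul_sum]
    ring

theorem Util_mix (γ : ℝ) (π₁ π₂ : DGC) (hK : π₂.K = π₁.K) (hτ : π₂.τ = π₁.τ)
    (ha : π₂.a = π₁.a) :
    (mix γ π₁ π₂).Util m F r = (1 - γ) * π₁.Util m F r + γ * π₂.Util m F r := by
  simp only [Util, Tsum, mix, hK, hτ, ha, uP_convex_comb, mul_add, sum_add_distrib,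
    mul_left_comm _ (1 - γ), mul_left_comm _ γ, ← mul_sum]
  ring

/-- Indexed by the segments of `π.split`: `2k` is the end of segment `k` of `π` and `2k + 1` the
middle of segment `k + 1`. -/
noncomputable def anchors (π : DGC) (q : ℕ → ℕ → ℝ) (l : ℕ) : ℕ → ℝ :=
  if Even l then π.rho (l / 2) else q (π.a ((l + 1) / 2))

theorem anchors_two_mul (π : DGC) (q : ℕ → ℕ → ℝ) (k : ℕ) :
    π.anchors q (2 * k) = π.rho k := by
  simp [anchors]

theorem anchors_two_mul_add_one (π : DGC) (q : ℕ → ℕ → ℝ) (k : ℕ) :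
    π.anchors q (2 * k + 1) = q (π.a (k + 1)) := by
  simp [anchors, show (2 * k + 1 + 1) / 2 = k + 1 by omega]

theorem Valid.anchors_nonneg (hπ : π.Valid n m c F) {q : ℕ → ℕ → ℝ}
    (hq : ∀ i ∈ Icc 1 n, ∀ j ∈ Icc 1 m, 0 < q i j) {l j : ℕ} (hl : l ≤ 2 * π.K)
    (hj : j ∈ Icc 1 m) : 0 ≤ π.anchors q l j := by
  obtain ⟨k, rfl | rfl⟩ := Nat.even_or_odd' l
  · rw [anchors_two_mul]
    exact hπ.rho_nonneg (by omega) hj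
  · rw [anchors_two_mul_add_one]
    exact (hq _ (hπ.a_mem (mem_Icc.2 ⟨by omega, by omega⟩)) j hj).le

theorem exists_anchors_le (π : DGC) (q : ℕ → ℕ → ℝ) (m : ℕ) :
    ∃ C, 0 ≤ C ∧ ∀ l ≤ 2 * π.K, ∀ j ∈ Icc 1 m, π.anchors q l j ≤ C := by
  obtain ⟨C, hC0, hC⟩ :=
    exists_nonneg_forall_le (range (2 * π.K + 1) ×ˢ Icc 1 m) fun x => π.anchors q x.1 x.2
  exact ⟨C, hC0, fun l hl j hj => hC (l, j) (mem_product.2 ⟨mem_range.2 (by omega), hj⟩)⟩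

/-- The drift `l * C` makes the payments nonnegative once `C` bounds the anchors
(`drift_increment_nonneg`). -/
noncomputable def pinned (π : DGC) (q : ℕ → ℕ → ℝ) (C : ℝ) : DGC :=
  π.split.withAverages fun l j => π.anchors q l j + l * C

noncomputable def perturb (π : DGC) (q : ℕ → ℕ → ℝ) (C γ : ℝ) : DGC :=
  mix γ π.split (π.pinned q C)

theorem Valid.pinned_p_nonneg (hπ : π.Valid n m c F) {q : ℕ → ℕ → ℝ} {C : ℝ}
    (hq : ∀ i ∈ Icc 1 n, ∀ j ∈ Icc 1 m, 0 < q i j) (hC0 : 0 ≤ C)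
    (hC : ∀ l ≤ 2 * π.K, ∀ j ∈ Icc 1 m, π.anchors q l j ≤ C) {l j : ℕ}
    (hl : l ∈ Icc 1 (2 * π.K)) (hj : j ∈ Icc 1 m) : 0 ≤ (π.pinned q C).p l j := by
  obtain ⟨s, rfl⟩ : ∃ s, l = s + 1 := ⟨l - 1, by simp only [mem_Icc] at hl; omega⟩
  have hτ := hπ.tau_split_pos
  have hl' : s + 1 ≤ 2 * π.K := (mem_Icc.1 hl).2
  have hτs := hτ (s + 1) hl
  have hT : 0 ≤ π.split.Tsum s :=
    Tsum_nonneg fun i hi => hτ i (Icc_subset_Icc_right (by omega) hi)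
  simp only [pinned, withAverages, Nat.add_sub_cancel, Nat.cast_add, Nat.cast_one]
  refine div_nonneg (drift_increment_nonneg hT ?_ (hπ.anchors_nonneg hq hl' hj)
    (hC s (by omega) j hj) hC0 s.cast_nonneg) hτs.le
  rw [Tsum_succ]
  exact le_add_of_nonneg_right hτs.le

section Perturb

variable {q : ℕ → ℕ → ℝ} {C γ : ℝ}

theorem perturb_K : (π.perturb q C γ).K = 2 * π.K := rfl

theorem perturb_a (l : ℕ) : (π.perturb q C γ).a l = π.a ((l + 1) / 2) := rfl

theorem Valid.rho_perturb (hπ : π.Valid n m c F) {l : ℕ} (hl : l ∈ Icc 1 (2 * π.K)) :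
    (π.perturb q C γ).rho l =
      fun j => (1 - γ) * π.split.rho l j + γ * (π.anchors q l j + l * C) := by
  funext j
  rw [perturb, rho_mix γ π.split (π.pinned q C) rfl, pinned, rho_withAverages _
    (fun i hi => hπ.tau_split_pos i (Icc_subset_Icc_right (mem_Icc.1 hl).2 hi))
    (by simp only [mem_Icc] at hl; omega)]

theorem Valid.rho_perturb_two_mul (hπ : π.Valid n m c F) {k : ℕ} (hk : k ∈ Icc 1 π.K) :
    (π.perturb q C γ).rho (2 * k) = fun j => π.rho k j + γ * (2 * k * C) := by
  obtain ⟨hk1, hkK⟩ := mem_Icc.1 hk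
  rw [hπ.rho_perturb (mem_Icc.2 ⟨by omega, by omega⟩), rho_split_two_mul π (by omega),
    anchors_two_mul]
  funext j
  push_cast
  ring

theorem Valid.rho_perturb_two_mul_add_one (hπ : π.Valid n m c F) {k : ℕ} (hk : k < π.K) :
    (π.perturb q C γ).rho (2 * k + 1) = fun j =>
      ((1 - γ) * π.split.rho (2 * k + 1) j + γ * q (π.a (k + 1)) j)
        + γ * ((2 * k + 1) * C) := by
  rw [hπ.rho_perturb (mem_Icc.2 ⟨by omega, by omega⟩), anchors_two_mul_add_one]
  funext j
  push_cast
  ring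

theorem Valid.BRg_rho_perturb_two_mul (hπ : π.Valid n m c F)
    (hrow : ∀ i ∈ Icc 1 n, ∑ j ∈ Icc 1 m, F i j = 1) {k : ℕ} (hk : k ∈ Icc 1 π.K) :
    BRg n m c F ((π.perturb q C γ).rho (2 * k)) = BRg n m c F (π.rho k) := by
  rw [hπ.rho_perturb_two_mul hk, BRg_add_const hrow]

theorem Valid.BRg_rho_perturb_two_mul_add_one (hπ : π.Valid n m c F)
    (hrow : ∀ i ∈ Icc 1 n, ∑ j ∈ Icc 1 m, F i j = 1)
    (hq : ∀ i ∈ Icc 1 n, BRg n m c F (q i) = {i}) (hγ : γ ∈ Set.Ioc 0 1) {k : ℕ}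
    (hk : k < π.K) :
    BRg n m c F ((π.perturb q C γ).rho (2 * k + 1)) = {π.a (k + 1)} := by
  rw [hπ.rho_perturb_two_mul_add_one hk, BRg_add_const hrow]
  exact BRg_convex_comb_eq_singleton hγ (hπ.mem_BRg_rho_split hk)
    (hq _ (hπ.a_mem (mem_Icc.2 ⟨by omega, hk⟩)))

theorem Valid.BRg_inter_perturb (hπ : π.Valid n m c F)
    (hrow : ∀ i ∈ Icc 1 n, ∑ j ∈ Icc 1 m, F i j = 1)
    (hq : ∀ i ∈ Icc 1 n, BRg n m c F (q i) = {i}) (hγ : γ ∈ Set.Ioc 0 1) {l : ℕ}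
    (hl : l ∈ Icc 1 (π.perturb q C γ).K) :
    BRg n m c F ((π.perturb q C γ).rho (l - 1)) ∩ BRg n m c F ((π.perturb q C γ).rho l) =
      {(π.perturb q C γ).a l} := by
  rw [perturb_K, mem_Icc] at hl
  obtain ⟨k, rfl | rfl⟩ := Nat.even_or_odd' l
  · have hk : k ∈ Icc 1 π.K := mem_Icc.2 ⟨by omega, by omega⟩
    rw [perturb_a, show (2 * k + 1) / 2 = k by omega, show 2 * k - 1 = 2 * (k - 1) + 1 by omega,
      hπ.BRg_rho_perturb_two_mul_add_one hrow hq hγ (by omega),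
      Nat.sub_add_cancel (by omega : 1 ≤ k), hπ.BRg_rho_perturb_two_mul hrow hk]
    exact Set.singleton_inter_of_mem (hπ.mem_BRg_rho hk)
  · have hk : k < π.K := by omega
    rw [perturb_a, show (2 * k + 1 + 1) / 2 = k + 1 by omega, Nat.add_sub_cancel,
      hπ.BRg_rho_perturb_two_mul_add_one hrow hq hγ hk]
    refine Set.inter_singleton_of_mem ?_
    rcases eq_or_ne k 0 with rfl | hk0
    · have h₁ := hπ.BRg_rho_perturb_two_mul_add_one (C := C) hrow hq hγ hk
      rw [mul_zero, zero_add] at h₁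
      rw [mul_zero, ← rho_one (π := π.perturb q C γ)
        (hπ.tau_split_pos 1 (mem_Icc.2 ⟨le_rfl, by omega⟩)).ne', h₁]
      rfl
    · rw [hπ.BRg_rho_perturb_two_mul hrow (mem_Icc.2 ⟨by omega, by omega⟩)]
      simpa using hπ.mem_BRg_rho_sub_one (mem_Icc.2 ⟨by omega, hk⟩)

theorem Valid.perturb (hπ : π.Valid n m c F) (hrow : ∀ i ∈ Icc 1 n, ∑ j ∈ Icc 1 m, F i j = 1)
    (hq : ∀ i ∈ Icc 1 n, (∀ j ∈ Icc 1 m, 0 < q i j) ∧ BRg n m c F (q i) = {i})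
    (hC0 : 0 ≤ C) (hC : ∀ l ≤ 2 * π.K, ∀ j ∈ Icc 1 m, π.anchors q l j ≤ C)
    (hγ : γ ∈ Set.Ioc 0 1) :
    (π.perturb q C γ).Valid n m c F := by
  refine valid_of_BRg_inter_eq_singleton (by rw [perturb_K]; have := hπ.1; omega)
    (fun l hl => ?_) fun l hl => hπ.BRg_inter_perturb hrow (fun i hi => (hq i hi).2) hγ hl
  rw [perturb_K] at hl
  have hk : (l + 1) / 2 ∈ Icc 1 π.K := by simp only [mem_Icc] at hl ⊢; omega
  refine ⟨fun j hj => ?_, hπ.tau_split_pos l hl, hπ.a_mem hk⟩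
  exact add_nonneg (mul_nonneg (sub_nonneg.2 hγ.2) (hπ.p_nonneg hk hj))
    (mul_nonneg hγ.1.le (hπ.pinned_p_nonneg (fun i hi => (hq i hi).1) hC0 hC hl hj))

theorem Util_perturb : (π.perturb q C γ).Util m F r =
    (1 - γ) * π.Util m F r + γ * (π.pinned q C).Util m F r := by
  rw [perturb, Util_mix γ π.split (π.pinned q C) rfl rfl rfl, Util_split]

end Perturb

theorem exists_valid_Util0_nonneg (hn : 1 ≤ n) (hr : ∀ j ∈ Icc 1 m, 0 ≤ r j)
    (hF : ∀ i ∈ Icc 1 n, ∀ j ∈ Icc 1 m, 0 ≤ F i j) :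
    ∃ π₀ : DGC, π₀.Valid n m c F ∧ 0 ≤ π₀.Util0 n m c F r := by
  obtain ⟨a, ha, hmax⟩ := exists_max_image (Icc 1 n) (uA m c F fun _ => 0) (nonempty_Icc.2 hn)
  let π₀ : DGC := ⟨1, fun _ _ => 0, fun _ => 1, fun _ => a⟩
  have hρ : π₀.rho 1 = fun _ => 0 := by
    funext j
    simp [π₀, rho, Tsum]
  refine ⟨π₀, ⟨le_rfl, fun _ _ => ⟨fun _ _ => le_rfl, one_pos, ha⟩, fun k hk => ?_,
    fun k hk hk' => absurd (hk.trans hk') (by simp [π₀])⟩, ?_⟩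
  · rw [show k = 1 by simp only [mem_Icc] at hk; exact le_antisymm hk.2 hk.1, hρ]
    exact ⟨ha, hmax⟩
  · refine div_nonneg (sum_nonneg fun k _ => ?_) (by simp [π₀, Tsum])
    split_ifs
    · exact le_rfl
    · exact mul_nonneg zero_le_one
        (sum_nonneg fun j hj => mul_nonneg (hF a ha j hj) (by simpa using hr j hj))

end DGC

theorem non_degenerate_approximation_general (n m : ℕ) (c : ℕ → ℝ) (F : ℕ → ℕ → ℝ)
    (r : ℕ → ℝ) (hn : 1 ≤ n)
    (hr : ∀ j ∈ Finset.Icc 1 m, 0 ≤ r j)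
    (hF : ∀ i ∈ Finset.Icc 1 n,
      (∀ j ∈ Finset.Icc 1 m, 0 ≤ F i j) ∧ ∑ j ∈ Finset.Icc 1 m, F i j = 1)
    (huniq : ∀ i ∈ Finset.Icc 1 n, ∃ q : ℕ → ℝ,
      (∀ j ∈ Finset.Icc 1 m, 0 < q j) ∧ BRg n m c F q = {i})
    (π : DGC) (hπ : π.Valid n m c F) (hU : 0 ≤ π.Util m F r)
    (ε : ℝ) (hε : 0 < ε) :
    ∃ π₀ : DGC, π₀.Valid n m c F ∧
      (1 - ε) * π.Util m F r ≤ π₀.Util0 n m c F r := by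
  rcases hU.eq_or_lt with hU0 | hUpos
  · obtain ⟨π₀, hπ₀, hU₀⟩ :=
      DGC.exists_valid_Util0_nonneg (c := c) hn hr fun i hi => (hF i hi).1
    exact ⟨π₀, hπ₀, by rwa [← hU0, mul_zero]⟩
  have hrow : ∀ i ∈ Icc 1 n, ∑ j ∈ Icc 1 m, F i j = 1 := fun i hi => (hF i hi).2
  choose! q hq using huniq
  obtain ⟨C, hC0, hC⟩ := π.exists_anchors_le q m
  obtain ⟨γ, hγ, hγU⟩ :=
    exists_mem_Ioc_mul_le (π.Util m F r - (π.pinned q C).Util m F r) (mul_pos hε hUpos)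
  refine ⟨π.perturb q C γ, hπ.perturb hrow hq hC0 hC hγ, ?_⟩
  rw [DGC.Util0_eq_Util fun l hl => DGC.not_degenerate_of_BRg_inter_eq_singleton
    (hπ.BRg_inter_perturb hrow (fun i hi => (hq i hi).2) hγ hl), DGC.Util_perturb]
  linarith

/-- If every action can be uniquely incentivized by a strictly
positive contract, then for every valid dynamic contract `π` with
`Util(π) ≥ 0` and every `ε > 0` there is a valid dynamic contract `π₀` whose
non-degenerate-segment utility `Util₀(π₀)` is at least `(1 − ε)·Util(π)`. -/
theorem non_degenerate_approximation (n m : ℕ) (c : ℕ → ℝ) (F : ℕ → ℕ → ℝ)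
    (r : ℕ → ℝ) (hn : 1 ≤ n)
    (hc : ∀ i ∈ Finset.Icc 1 n, 0 ≤ c i)
    (hr : ∀ j ∈ Finset.Icc 1 m, 0 ≤ r j)
    (hF : ∀ i ∈ Finset.Icc 1 n,
      (∀ j ∈ Finset.Icc 1 m, 0 ≤ F i j) ∧ ∑ j ∈ Finset.Icc 1 m, F i j = 1)
    (huniq : ∀ i ∈ Finset.Icc 1 n, ∃ q : ℕ → ℝ,
      (∀ j ∈ Finset.Icc 1 m, 0 < q j) ∧ BRg n m c F q = {i})
    (π : DGC) (hπ : π.Valid n m c F) (hU : 0 ≤ π.Util m F r)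
    (ε : ℝ) (hε : 0 < ε) :
    ∃ π₀ : DGC, π₀.Valid n m c F ∧
      (1 - ε) * π.Util m F r ≤ π₀.Util0 n m c F r :=
  non_degenerate_approximation_general n m c F r hn hr hF huniq π hπ hU ε hε
end
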